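/- arXiv:2101.12542 — 5 statements merged into one kernel-verified Lean document; each statement's English description precedes it below -/
import Mathlib

section
/- Let X and Y be real Banach spaces, let K ⊆ Y be a convex cone with nonempty interior, let R ⊆ X be a set and f : X → Y a mapping, and let x̄ ∈ R. Suppose that (i) f is K-Lipschitz near x̄ with constant ℓ_f > 0 and vector e ∈ int K ∩ B(0,1), and (ii) ψ : X → [0,+∞] is a local error bound function for R near x̄ (with S = X). Then for any ℓ ≥ ℓ_f, if x̄ is a locally weakly efficient solution of the problem of minimizing f over R, then x̄ is a locally weakly efficient solution of the unconstrained penalized problem: there exists δ > 0 such that there is no x ∈ B(x̄,δ) with ψ(x) < +∞ and f(x) + ℓψ(x)e ∈ f(x̄) − int K. -/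
open Filter Topology Metric Set Pointwise
open scoped ENNReal NNReal

noncomputable section

/-- The `r`-enlargement `B(A,r)` of a set `A`. -/
def enlarge {Z : Type*} [SeminormedAddCommGroup Z] (A : Set Z) (r : ℝ) : Set Z :=
  {z | Metric.infDist z A ≤ r}

/-- Merit function `ν(x) = sup_{z ∈ G(x)} dist(z, C)`, with values in `[0,∞]`. -/
def merit {X Z : Type*} [SeminormedAddCommGroup Z] (G : X → Set Z) (C : Set Z) (x : X) : ℝ≥0∞ :=
  ⨆ z ∈ G x, ENNReal.ofReal (Metric.infDist z C)

/-- Lower semicontinuity of a set-valued map at a point. -/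
def LscAt {X Z : Type*} [TopologicalSpace X] [TopologicalSpace Z] (G : X → Set Z) (x : X) : Prop :=
  ∀ V : Set Z, IsOpen V → (G x ∩ V).Nonempty → ∃ U ∈ nhds x, ∀ u ∈ U, (G u ∩ V).Nonempty

/-- `G` is l.s.c. at every point of some ball around `xb`. -/
def LscAround {X Z : Type*} [SeminormedAddCommGroup X] [TopologicalSpace Z]
    (G : X → Set Z) (xb : X) : Prop :=
  ∃ ρ > 0, ∀ x ∈ Metric.closedBall xb ρ, LscAt G x

/-- `G` is metrically `C`-increasing around `xb` relative to `S`, with witnesses `α > 1`, `δ > 0`. -/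
def MetIncrWith {X Z : Type*} [SeminormedAddCommGroup X] [SeminormedAddCommGroup Z]
    (G : X → Set Z) (S : Set X) (C : Set Z) (xb : X) (α δ : ℝ) : Prop :=
  ∀ x ∈ Metric.closedBall xb δ ∩ S, ∀ r ∈ Set.Ioo (0:ℝ) δ,
    ∃ z ∈ Metric.closedBall x r ∩ S, enlarge (G z) (α * r) ⊆ enlarge (G x + C) r

/-- `G` is metrically `C`-increasing around `xb` relative to `S`. -/
def MetIncr {X Z : Type*} [SeminormedAddCommGroup X] [SeminormedAddCommGroup Z]
    (G : X → Set Z) (S : Set X) (C : Set Z) (xb : X) : Prop :=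
  ∃ α > 1, ∃ δ > 0, MetIncrWith G S C xb α δ

/-- The exact bound of metric `C`-increase of `G` around `xb`, relative to `S`. -/
def incrBound {X Z : Type*} [SeminormedAddCommGroup X] [SeminormedAddCommGroup Z]
    (G : X → Set Z) (S : Set X) (C : Set Z) (xb : X) : ℝ≥0∞ :=
  sSup {a : ℝ≥0∞ | ∃ α : ℝ, a = ENNReal.ofReal α ∧ 1 < α ∧ ∃ δ > 0, MetIncrWith G S C xb α δ}

open Classical in
/-- Strong slope of `φ` relative to `S` at `x`: `0` if `x` is a local minimizer of `φ` on `S`,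
otherwise `inf_{r>0} sup_{z ∈ B(x,r)∩S, z ≠ x} (φ(x) − φ(z))/‖x−z‖`. -/
def strongSlope {X : Type*} [SeminormedAddCommGroup X] (φ : X → ℝ≥0∞) (S : Set X) (x : X) :
    ℝ≥0∞ :=
  if ∃ r > 0, ∀ z ∈ S ∩ Metric.closedBall x r, φ x ≤ φ z then 0
  else ⨅ r ∈ Set.Ioi (0:ℝ), ⨆ z ∈ (S ∩ Metric.closedBall x r) \ {x},
    (φ x - φ z) / ENNReal.ofReal ‖x - z‖

/-- `ψ` is a local error bound function for `R` near `xb`, relative to `S`. -/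
def LocErrBoundFun {X : Type*} [SeminormedAddCommGroup X]
    (ψ : X → ℝ≥0∞) (R S : Set X) (xb : X) : Prop :=
  ∃ δ > 0, (∀ x ∈ Metric.closedBall xb δ ∩ S, ENNReal.ofReal (Metric.infDist x R) ≤ ψ x) ∧
    ∀ x ∈ R, ψ x = ENNReal.ofReal (Metric.infDist x R)

/-- `f` is `K`-Lipschitz near `xb` with constant `ℓ` and vector `e`. -/
def KLipschitzNearWith {X Y : Type*} [SeminormedAddCommGroup X] [SeminormedAddCommGroup Y]
    [NormedSpace ℝ Y] (f : X → Y) (K : Set Y) (xb : X) (ℓ : ℝ) (e : Y) : Prop :=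
  ∃ δ > 0, ∀ x₁ ∈ Metric.closedBall xb δ, ∀ x₂ ∈ Metric.closedBall xb δ,
    f x₁ - f x₂ + (ℓ * ‖x₁ - x₂‖) • e ∈ K

/-- `xb` is a locally weakly efficient solution of minimizing `f` over `R`
(w.r.t. the ordering cone `K`). -/
def LocWeakEffOn {X Y : Type*} [SeminormedAddCommGroup X] [SeminormedAddCommGroup Y]
    (f : X → Y) (R : Set X) (K : Set Y) (xb : X) : Prop :=
  ∃ δ > 0, ∀ x ∈ R ∩ Metric.closedBall xb δ, f xb - f x ∉ interior K

/-- `xb` is a locally efficient solution of minimizing `f` over `R`. -/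
def LocEffOn {X Y : Type*} [SeminormedAddCommGroup X] [SeminormedAddCommGroup Y]
    (f : X → Y) (R : Set X) (K : Set Y) (xb : X) : Prop :=
  ∃ δ > 0, ∀ x ∈ R ∩ Metric.closedBall xb δ, f xb - f x ∈ K → f x = f xb

/-- Contingent (Bouligand tangent) cone to `A` at `xb`. -/
def contingentCone {X : Type*} [SeminormedAddCommGroup X] [NormedSpace ℝ X]
    (A : Set X) (xb : X) : Set X :=
  {v | ∃ (vn : ℕ → X) (tn : ℕ → ℝ), Filter.Tendsto vn Filter.atTop (nhds v) ∧
    Filter.Tendsto tn Filter.atTop (nhds 0) ∧ (∀ n, 0 < tn n) ∧ ∀ n, xb + tn n • vn n ∈ A}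

/-- Feasible direction cone to `A` at `xb`. -/
def feasDirCone {X : Type*} [SeminormedAddCommGroup X] [NormedSpace ℝ X]
    (A : Set X) (xb : X) : Set X :=
  {v | ∃ δ > 0, ∀ t ∈ Set.Ioo (0:ℝ) δ, xb + t • v ∈ A}

/-- Weak feasible direction cone to `A` at `xb`. -/
def weakFeasDirCone {X : Type*} [SeminormedAddCommGroup X] [NormedSpace ℝ X]
    (A : Set X) (xb : X) : Set X :=
  {v | ∀ ε > 0, ∃ t ∈ Set.Ioo (0:ℝ) ε, xb + t • v ∈ A}

/-- Fréchet upper subdifferential of an `[0,∞]`-valued function `φ` (finite at `xb`) at `xb`. -/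
def FUpperSubdiff {X : Type*} [NormedAddCommGroup X] [NormedSpace ℝ X]
    (φ : X → ℝ≥0∞) (xb : X) : Set (X →L[ℝ] ℝ) :=
  {p | ∀ ε > 0, ∃ δ > 0, ∀ x ∈ Metric.ball xb δ, x ≠ xb →
    φ x ≠ ⊤ ∧ (φ x).toReal - (φ xb).toReal - p (x - xb) ≤ ε * ‖x - xb‖}

/-- `d` is the directional derivative of `f` at `xb` in direction `v`. -/
def HasDirDerivAt {X Y : Type*} [SeminormedAddCommGroup X] [NormedSpace ℝ X]
    [SeminormedAddCommGroup Y] [NormedSpace ℝ Y] (f : X → Y) (xb v : X) (d : Y) : Prop :=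
  Filter.Tendsto (fun t : ℝ => t⁻¹ • (f (xb + t • v) - f xb)) (nhdsWithin 0 (Set.Ioi 0)) (nhds d)

/-- `H` is an outer prederivative of `G` at `xb`. -/
def OuterPrederivAt {X Z : Type*} [SeminormedAddCommGroup X] [NormedSpace ℝ X]
    [SeminormedAddCommGroup Z] [NormedSpace ℝ Z] (G H : X → Set Z) (xb : X) : Prop :=
  (∀ t : ℝ, 0 < t → ∀ v, H (t • v) = t • H v) ∧
  ∀ ε > 0, ∃ δ > 0, ∀ x ∈ Metric.closedBall xb δ,
    G x ⊆ G xb + H (x - xb) + Metric.closedBall 0 (ε * ‖x - xb‖)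

/-- `H` is Lipschitz with respect to the Hausdorff distance. -/
def HausLipschitz {X Z : Type*} [SeminormedAddCommGroup X] [SeminormedAddCommGroup Z]
    (H : X → Set Z) : Prop :=
  ∃ l : ℝ, 0 ≤ l ∧ ∀ x₁ x₂ : X,
    EMetric.hausdorffEdist (H x₁) (H x₂) ≤ ENNReal.ofReal (l * ‖x₁ - x₂‖)

/-- `h` is the B-derivative of `f` at `xb`. -/
def IsBDerivAt {X Y : Type*} [NormedAddCommGroup X] [NormedSpace ℝ X]
    [NormedAddCommGroup Y] [NormedSpace ℝ Y] (f : X → Y) (h : X → Y) (xb : X) : Prop :=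
  Continuous h ∧ (∀ t : ℝ, 0 < t → ∀ v, h (t • v) = t • h v) ∧
  Filter.Tendsto (fun x => ‖x - xb‖⁻¹ • (f x - f xb - h (x - xb)))
    (nhdsWithin xb {xb}ᶜ) (nhds 0)

/-- Upper inverse image `H⁺¹(C)` of `C` through `H`. -/
def upperInv {X Z : Type*} (H : X → Set Z) (C : Set Z) : Set X := {x | H x ⊆ C}

end

/-
If `f x + ℓ ψ(x) e` were strictly below `f xb`, pick `u ∈ R` almost
nearest to `x`. The `K`-Lipschitz bound gives `f u ≤ f x + ℓ_f ‖x - u‖ e`, and the error bound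
gives `ℓ_f ‖x - u‖ ≤ ℓ ψ(x) + η`, where the slack `η` is absorbed by the openness of `int K`.
Hence `f u` is strictly below `f xb`, contradicting weak efficiency on `R`.
-/

section ConeInterior

variable {Y : Type*} [AddCommGroup Y] {K : Set Y}

lemma add_mem_of_convex_of_smul_mem [Module ℝ Y] (hKconv : Convex ℝ K)
    (hKcone : ∀ t : ℝ, 0 < t → ∀ y ∈ K, t • y ∈ K) {a b : Y} (ha : a ∈ K) (hb : b ∈ K) :
    a + b ∈ K := by
  have hmid : (1 / 2 : ℝ) • a + (1 / 2 : ℝ) • b ∈ K :=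
    hKconv ha hb (by norm_num) (by norm_num) (by norm_num)
  have h := hKcone 2 two_pos _ hmid
  rwa [smul_add, smul_smul, smul_smul, mul_one_div_cancel two_ne_zero, one_smul, one_smul] at h

variable [TopologicalSpace Y] [IsTopologicalAddGroup Y]

lemma add_mem_interior_of_add_mem (hadd : ∀ a ∈ K, ∀ b ∈ K, a + b ∈ K) {w k : Y}
    (hw : w ∈ interior K) (hk : k ∈ K) : w + k ∈ interior K := by
  have hsub : interior K + K ⊆ K := by
    rintro _ ⟨a, ha, b, hb, rfl⟩
    exact hadd a (interior_subset ha) b hb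
  exact interior_maximal hsub isOpen_interior.add_right (Set.add_mem_add hw hk)

lemma eventually_sub_smul_mem [Module ℝ Y] [ContinuousSMul ℝ Y] {U : Set Y} (hU : IsOpen U)
    {w : Y} (hw : w ∈ U) (e : Y) : ∀ᶠ t in 𝓝 (0 : ℝ), w - t • e ∈ U := by
  have hcont : Continuous fun t : ℝ => w - t • e := by fun_prop
  exact hcont.continuousAt.preimage_mem_nhds (by simpa using hU.mem_nhds hw)

lemma sub_mem_interior_of_slack [Module ℝ Y] (hKconv : Convex ℝ K)
    (hKcone : ∀ t : ℝ, 0 < t → ∀ y ∈ K, t • y ∈ K) {e y₀ y₁ y₂ : Y} {a b η : ℝ} (he : e ∈ K)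
    (hw : y₀ - (y₁ + a • e) - η • e ∈ interior K) (hab : b < a + η)
    (hLip : y₁ - y₂ + b • e ∈ K) : y₀ - y₂ ∈ interior K := by
  have hadd : ∀ a ∈ K, ∀ b ∈ K, a + b ∈ K := fun _ ha _ hb ↦
    add_mem_of_convex_of_smul_mem hKconv hKcone ha hb
  have hsplit : y₀ - y₂ = (y₀ - (y₁ + a • e) - η • e) + (a + η - b) • e + (y₁ - y₂ + b • e) := by
    module
  rw [hsplit]
  exact add_mem_interior_of_add_mem hadd
    (add_mem_interior_of_add_mem hadd hw (hKcone _ (by linarith) e he)) hLip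

end ConeInterior

lemma exists_mem_mul_dist_lt_infDist_add {X : Type*} [PseudoMetricSpace X] {R : Set X} {xb : X}
    (hxb : xb ∈ R) (x : X) {ℓf η : ℝ} (hℓf : 0 < ℓf) (hη : 0 < η) :
    ∃ u ∈ R, ℓf * dist x u < ℓf * infDist x R + η ∧ dist u xb < 2 * dist x xb + η / ℓf := by
  obtain ⟨u, huR, hxu⟩ :=
    (infDist_lt_iff ⟨xb, hxb⟩).mp (lt_add_of_pos_right (infDist x R) (div_pos hη hℓf))
  refine ⟨u, huR, ?_, ?_⟩
  · calc ℓf * dist x u < ℓf * (infDist x R + η / ℓf) := by gcongr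
      _ = ℓf * infDist x R + η := by field_simp
  · linarith [dist_triangle u x xb, dist_comm x u, infDist_le_dist_of_mem (x := x) hxb]

theorem statement_0_general
    {X Y : Type*} [NormedAddCommGroup X] [NormedSpace ℝ X]
    [NormedAddCommGroup Y] [NormedSpace ℝ Y]
    (K : Set Y) (hKconv : Convex ℝ K)
    (hKcone : ∀ t : ℝ, 0 < t → ∀ y ∈ K, t • y ∈ K)
    (R : Set X) (f : X → Y) (xb : X) (hxb : xb ∈ R)
    (ℓf : ℝ) (hℓf : 0 < ℓf) (e : Y) (he : e ∈ interior K)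
    (hLip : KLipschitzNearWith f K xb ℓf e)
    (ψ : X → ℝ≥0∞) (hψ : LocErrBoundFun ψ R Set.univ xb)
    (ℓ : ℝ) (hℓ : ℓf ≤ ℓ)
    (hweff : LocWeakEffOn f R K xb) :
    ∃ δ > 0, ∀ x ∈ Metric.closedBall xb δ, ψ x ≠ ⊤ →
      f xb - (f x + (ℓ * (ψ x).toReal) • e) ∉ interior K := by
  obtain ⟨δ₁, hδ₁, hLip⟩ := hLip
  obtain ⟨δ₂, hδ₂, hψR, -⟩ := hψ
  obtain ⟨δ₃, hδ₃, hweff⟩ := hweff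
  set δ := min δ₁ (min δ₂ δ₃) / 3 with hδ
  have hδ₁₂₃ : 3 * δ ≤ δ₁ ∧ 3 * δ ≤ δ₂ ∧ 3 * δ ≤ δ₃ := by
    refine ⟨?_, ?_, ?_⟩ <;> simp only [hδ] <;> grind
  refine ⟨δ, by positivity, fun x hx hψx hw => ?_⟩
  rw [mem_closedBall] at hx
  obtain ⟨η, hwη, hηpos, hηδ⟩ := (((eventually_sub_smul_mem isOpen_interior hw e).filter_mono
    nhdsWithin_le_nhds).and (Ioo_mem_nhdsGT (by positivity : 0 < ℓf * δ))).exists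
  have hdistR : infDist x R ≤ (ψ x).toReal :=
    (ENNReal.ofReal_le_iff_le_toReal hψx).mp (hψR x ⟨mem_closedBall.mpr (by linarith), trivial⟩)
  obtain ⟨u, huR, hxu, hu⟩ := exists_mem_mul_dist_lt_infDist_add hxb x hℓf hηpos
  have hηℓf : η / ℓf < δ := (div_lt_iff₀' hℓf).mpr hηδ
  have hslack : ℓf * ‖x - u‖ < ℓ * (ψ x).toReal + η := by
    rw [← dist_eq_norm]
    nlinarith [infDist_nonneg (x := x) (s := R)]
  exact hweff u ⟨huR, mem_closedBall.mpr (by linarith)⟩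
    (sub_mem_interior_of_slack hKconv hKcone (interior_subset he) hwη hslack
      (hLip x (mem_closedBall.mpr (by linarith)) u (mem_closedBall.mpr (by linarith))))

/-- vector Clarke penalization principle, weak efficiency case. -/
theorem statement_0
    {X Y : Type*} [NormedAddCommGroup X] [NormedSpace ℝ X] [CompleteSpace X]
    [NormedAddCommGroup Y] [NormedSpace ℝ Y] [CompleteSpace Y]
    (K : Set Y) (hKconv : Convex ℝ K)
    (hKcone : ∀ t : ℝ, 0 < t → ∀ y ∈ K, t • y ∈ K) (hKint : (interior K).Nonempty)
    (R : Set X) (f : X → Y) (xb : X) (hxb : xb ∈ R)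
    (ℓf : ℝ) (hℓf : 0 < ℓf) (e : Y) (he : e ∈ interior K) (hnorme : ‖e‖ ≤ 1)
    (hLip : KLipschitzNearWith f K xb ℓf e)
    (ψ : X → ℝ≥0∞) (hψ : LocErrBoundFun ψ R Set.univ xb)
    (ℓ : ℝ) (hℓ : ℓf ≤ ℓ)
    (hweff : LocWeakEffOn f R K xb) :
    ∃ δ > 0, ∀ x ∈ Metric.closedBall xb δ, ψ x ≠ ⊤ →
      f xb - (f x + (ℓ * (ψ x).toReal) • e) ∉ interior K :=
  statement_0_general K hKconv hKcone R f xb hxb ℓf hℓf e he hLip ψ hψ ℓ hℓ hweff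
end

section
/- Let X, Z be real Banach spaces, S ⊆ X a nonempty closed set, C ⊆ Z a proper closed convex cone with C ≠ {0}, and G : X ⇉ Z a set-valued mapping with G(x) ≠ ∅ for all x ∈ X. Let ν(x) = sup_{z ∈ G(x)} dist(z,C) be the merit function, R = S ∩ {x : G(x) ⊆ C}, and let x̄ ∈ R. Suppose that (i) G is lower semicontinuous at every point of some ball around x̄, and (ii) there exist σ > 0 and r > 0 such that the strong slope of ν relative to S at x is at least σ for every x ∈ B(x̄,r) ∩ S with ν(x) > 0. Then the function ψ = σ⁻¹ν is a local error bound function for R near x̄ (relative to S). -/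
open Filter Topology Metric Set Pointwise
open scoped ENNReal NNReal

/-! Suppose `σ⁻¹ ν(x) < λ < d(x, R)` for some `x ∈ S` near `x̄`. Ekeland's variational principle,
applied to the lower semicontinuous function `ν` on `S ∩ B(x̄, ρ)` with a constant `κ < σ` and
`κ λ > ν(x)`, gives a point `y` with `‖y - x‖ ≤ λ` at which `ν + κ‖· - y‖` attains a strict minimum.
Then `y ∉ R`, so `ν(y) > 0`, while the strong slope of `ν` at `y` is at most `κ < σ`: a
contradiction. Lower semicontinuity of `ν` is inherited from that of `G`. -/

section Ekeland

variable {X : Type*} [MetricSpace X] {A : Set X} {φ : X → ℝ≥0∞} {κ : ℝ}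

def ekelandSet (A : Set X) (φ : X → ℝ≥0∞) (κ : ℝ) (x : X) : Set X :=
  {z ∈ A | φ z + ENNReal.ofReal (κ * dist z x) ≤ φ x}

lemma self_mem_ekelandSet {x : X} (hx : x ∈ A) : x ∈ ekelandSet A φ κ x := by
  simp [ekelandSet, hx]

lemma le_of_mem_ekelandSet {x z : X} (hz : z ∈ ekelandSet A φ κ x) : φ z ≤ φ x :=
  le_self_add.trans hz.2

lemma ekelandSet_subset (hκ : 0 ≤ κ) {x y : X} (hy : y ∈ ekelandSet A φ κ x) :
    ekelandSet A φ κ y ⊆ ekelandSet A φ κ x := by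
  intro z hz
  refine ⟨hz.1, ?_⟩
  have htri : ENNReal.ofReal (κ * dist z x)
      ≤ ENNReal.ofReal (κ * dist z y) + ENNReal.ofReal (κ * dist y x) := by
    rw [← ENNReal.ofReal_add (by positivity) (by positivity), ← mul_add]
    exact ENNReal.ofReal_le_ofReal (mul_le_mul_of_nonneg_left (dist_triangle z y x) hκ)
  calc φ z + ENNReal.ofReal (κ * dist z x)
      ≤ φ z + ENNReal.ofReal (κ * dist z y) + ENNReal.ofReal (κ * dist y x) := by
        rw [add_assoc]; gcongr
    _ ≤ φ y + ENNReal.ofReal (κ * dist y x) := by gcongr; exact hz.2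
    _ ≤ φ x := hy.2

lemma isClosed_ekelandSet (hA : IsClosed A) (hφ : LowerSemicontinuousOn φ A) (x : X) :
    IsClosed (ekelandSet A φ κ x) := by
  have hg : LowerSemicontinuousOn (fun z => φ z + ENNReal.ofReal (κ * dist z x)) A :=
    hφ.add <| (ENNReal.continuous_ofReal.comp (by fun_prop)).lowerSemicontinuous
      |>.lowerSemicontinuousOn A
  obtain ⟨v, hv, hAv⟩ := lowerSemicontinuousOn_iff_preimage_Iic.1 hg (φ x)
  rw [show ekelandSet A φ κ x = A ∩ v from hAv]
  exact hA.inter hv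

lemma exists_mem_ekelandSet_le_iInf_add {x : X} (hx : x ∈ A) {ε : ℝ≥0∞} (hε : ε ≠ 0) :
    ∃ z ∈ ekelandSet A φ κ x, φ z ≤ (⨅ w ∈ ekelandSet A φ κ x, φ w) + ε := by
  by_cases htop : (⨅ w ∈ ekelandSet A φ κ x, φ w) = ⊤
  · exact ⟨x, self_mem_ekelandSet hx, by simp [htop]⟩
  obtain ⟨z, hlt⟩ := iInf_lt_iff.1 (ENNReal.lt_add_right htop hε)
  obtain ⟨hz, hlt⟩ := iInf_lt_iff.1 hlt
  exact ⟨z, hz, hlt.le⟩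

lemma exists_seq_mem_ekelandSet {x₀ : X} (hx₀ : x₀ ∈ A) :
    ∃ v : ℕ → X, v 0 = x₀ ∧ ∀ n, v (n + 1) ∈ ekelandSet A φ κ (v n) ∧
      φ (v (n + 1)) ≤ (⨅ w ∈ ekelandSet A φ κ (v n), φ w) + 2⁻¹ ^ n := by
  choose! next hnext using fun (n : ℕ) (x : X) (hx : x ∈ A) =>
    exists_mem_ekelandSet_le_iInf_add (φ := φ) (κ := κ) hx (ε := 2⁻¹ ^ n) (by simp)
  let v : ℕ → X := fun n => Nat.rec x₀ next n
  have hvA : ∀ n, v n ∈ A := by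
    intro n
    induction n with
    | zero => exact hx₀
    | succ n ih => exact (hnext n (v n) ih).1.1
  exact ⟨v, rfl, fun n => hnext n (v n) (hvA n)⟩

lemma cauchySeq_of_mem_ekelandSet (hκ : 0 < κ) {v : ℕ → X}
    (hv : ∀ n, v (n + 1) ∈ ekelandSet A φ κ (v n)) (hv0 : φ (v 0) ≠ ⊤) : CauchySeq v := by
  set d : ℕ → ℝ≥0∞ := fun i => ENNReal.ofReal (κ * dist (v (i + 1)) (v i)) with hd
  have hsum : ∀ n, (∑ i ∈ Finset.range n, d i) + φ (v n) ≤ φ (v 0) := by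
    intro n
    induction n with
    | zero => simp
    | succ n ih =>
      calc (∑ i ∈ Finset.range (n + 1), d i) + φ (v (n + 1))
          = (∑ i ∈ Finset.range n, d i) + (φ (v (n + 1)) + d n) := by
            rw [Finset.sum_range_succ]; ring
        _ ≤ (∑ i ∈ Finset.range n, d i) + φ (v n) := by gcongr; exact (hv n).2
        _ ≤ φ (v 0) := ih
  have htsum : ∑' i, d i ≤ φ (v 0) := by
    rw [ENNReal.tsum_eq_iSup_nat]
    exact iSup_le fun n => le_self_add.trans (hsum n)
  refine cauchySeq_of_edist_le_of_tsum_ne_top (fun i => (ENNReal.ofReal κ)⁻¹ * d i)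
    (fun n => ?_) ?_
  · simp only [hd]
    rw [edist_dist, ENNReal.ofReal_mul hκ.le, ← mul_assoc, ENNReal.inv_mul_cancel
      (ENNReal.ofReal_pos.2 hκ).ne' ENNReal.ofReal_ne_top, one_mul, dist_comm]
  · rw [ENNReal.tsum_mul_left]
    exact ENNReal.mul_ne_top (by simpa using hκ) (ne_top_of_le_ne_top hv0 htsum)

theorem exists_ekeland_point [CompleteSpace X] (hA : IsClosed A) (hφ : LowerSemicontinuousOn φ A)
    {x₀ : X} (hx₀ : x₀ ∈ A) (hφx₀ : φ x₀ ≠ ⊤) (hκ : 0 < κ) :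
    ∃ y ∈ ekelandSet A φ κ x₀, ∀ z ∈ A, z ≠ y → φ y < φ z + ENNReal.ofReal (κ * dist z y) := by
  obtain ⟨v, rfl, hv⟩ := exists_seq_mem_ekelandSet (φ := φ) (κ := κ) hx₀
  have hvA : ∀ n, v n ∈ A := fun
    | 0 => hx₀
    | n + 1 => (hv n).1.1
  have hchain : ∀ n m, n ≤ m → v m ∈ ekelandSet A φ κ (v n) := by
    intro n m hnm
    induction m, hnm using Nat.le_induction with
    | base => exact self_mem_ekelandSet (hvA n)
    | succ m _ ih => exact ekelandSet_subset hκ.le ih (hv m).1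
  obtain ⟨y, hy⟩ := cauchySeq_tendsto_of_complete
    (cauchySeq_of_mem_ekelandSet hκ (fun n => (hv n).1) hφx₀)
  have hyF : ∀ n, y ∈ ekelandSet A φ κ (v n) := fun n =>
    (isClosed_ekelandSet hA hφ _).mem_of_tendsto hy
      ((eventually_ge_atTop n).mono fun m hm => hchain n m hm)
  refine ⟨y, hyF 0, fun z hzA hzy => lt_of_not_ge fun hz => hzy ?_⟩
  have hzF : ∀ n, z ∈ ekelandSet A φ κ (v n) := fun n =>
    ekelandSet_subset hκ.le (hyF n) ⟨hzA, hz⟩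
  have hyz : φ y ≤ φ z := by
    have hlim : Tendsto (fun n : ℕ => φ z + 2⁻¹ ^ n) atTop (𝓝 (φ z)) := by
      simpa using tendsto_const_nhds.add
        (ENNReal.tendsto_pow_atTop_nhds_zero_of_lt_one (r := 2⁻¹) (by norm_num))
    refine ge_of_tendsto hlim (Eventually.of_forall fun n => ?_)
    calc φ y ≤ φ (v (n + 1)) := le_of_mem_ekelandSet (hyF (n + 1))
      _ ≤ (⨅ w ∈ ekelandSet A φ κ (v n), φ w) + 2⁻¹ ^ n := (hv n).2
      _ ≤ φ z + 2⁻¹ ^ n := by gcongr; exact iInf₂_le z (hzF n)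
  have hφz : φ z ≠ ⊤ := ne_top_of_le_ne_top hφx₀ (le_of_mem_ekelandSet (hzF 0))
  have hdist : ENNReal.ofReal (κ * dist z y) ≤ 0 :=
    ENNReal.le_of_add_le_add_left hφz (by simpa using hz.trans hyz)
  rw [nonpos_iff_eq_zero, ENNReal.ofReal_eq_zero] at hdist
  exact dist_le_zero.1 (nonpos_of_mul_nonpos_right hdist hκ)

end Ekeland

lemma strongSlope_le_of_le_add {X : Type*} [SeminormedAddCommGroup X] {φ : X → ℝ≥0∞}
    {S : Set X} {y : X} {κ δ : ℝ} (hκ : 0 ≤ κ) (hδ : 0 < δ)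
    (h : ∀ z ∈ S ∩ closedBall y δ, φ y ≤ φ z + ENNReal.ofReal (κ * dist z y)) :
    strongSlope φ S y ≤ ENNReal.ofReal κ := by
  unfold strongSlope
  split_ifs
  · exact zero_le
  refine (iInf₂_le δ hδ).trans (iSup₂_le fun z hz => ENNReal.div_le_of_le_mul ?_)
  rw [tsub_le_iff_left, ← ENNReal.ofReal_mul hκ, ← dist_eq_norm, dist_comm]
  exact h z hz.1

section ErrorBound

variable {X : Type*} [NormedAddCommGroup X] [CompleteSpace X] {S : Set X} {φ : X → ℝ≥0∞}
  {xb : X} {ρ σ : ℝ}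

lemma exists_zero_near_of_le_strongSlope (hS : IsClosed S) (hσ : 0 < σ)
    (hφ : LowerSemicontinuousOn φ (S ∩ closedBall xb ρ))
    (hslope : ∀ x ∈ closedBall xb ρ ∩ S, φ x ≠ 0 → ENNReal.ofReal σ ≤ strongSlope φ S x)
    {x : X} (hx : x ∈ closedBall xb (ρ / 4) ∩ S) (hφx : φ x ≠ ⊤) {lam : ℝ}
    (hlam : (φ x).toReal < σ * lam) (hlamρ : lam ≤ ρ / 4) :
    ∃ y ∈ S, φ y = 0 ∧ dist y x ≤ lam := by
  have hlam0 : 0 < lam := pos_of_mul_pos_right (ENNReal.toReal_nonneg.trans_lt hlam) hσ.le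
  obtain ⟨κ, hκε, hκσ⟩ : ∃ κ, (φ x).toReal / lam < κ ∧ κ < σ :=
    exists_between ((div_lt_iff₀ hlam0).2 hlam)
  have hκ : 0 < κ := (div_nonneg ENNReal.toReal_nonneg hlam0.le).trans_lt hκε
  have hxA : x ∈ S ∩ closedBall xb ρ := ⟨hx.2, closedBall_subset_closedBall (by linarith) hx.1⟩
  obtain ⟨y, ⟨⟨hyS, -⟩, hy⟩, hymin⟩ :=
    exists_ekeland_point (hS.inter isClosed_closedBall) hφ hxA hφx hκ
  have hyx : dist y x ≤ lam := by
    have hκd : κ * dist y x ≤ (φ x).toReal :=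
      (ENNReal.ofReal_le_iff_le_toReal hφx).1 (le_add_self.trans hy)
    have := (div_lt_iff₀ hlam0).1 hκε
    nlinarith
  refine ⟨y, hyS, by_contra fun hy0 => ?_, hyx⟩
  have hyxb : dist y xb ≤ ρ / 2 := by
    linarith [dist_triangle y x xb, mem_closedBall.1 hx.1]
  have hle : strongSlope φ S y ≤ ENNReal.ofReal κ := by
    refine strongSlope_le_of_le_add hκ.le (δ := ρ / 4) (by linarith) fun z ⟨hzS, hzy⟩ => ?_
    rcases eq_or_ne z y with rfl | hne
    · exact le_self_add
    have hzA : z ∈ S ∩ closedBall xb ρ :=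
      ⟨hzS, mem_closedBall.2 (by linarith [dist_triangle z y xb, mem_closedBall.1 hzy])⟩
    exact (hymin z hzA hne).le
  have hσκ := (hslope y ⟨mem_closedBall.2 (by linarith), hyS⟩ hy0).trans hle
  linarith [(ENNReal.ofReal_le_ofReal_iff hκ.le).1 hσκ]

theorem locErrBoundFun_of_le_strongSlope (hS : IsClosed S) (hxb : xb ∈ S) (hφxb : φ xb = 0)
    (hσ : 0 < σ) (hρ : 0 < ρ) (hφ : LowerSemicontinuousOn φ (S ∩ closedBall xb ρ))
    (hslope : ∀ x ∈ closedBall xb ρ ∩ S, φ x ≠ 0 → ENNReal.ofReal σ ≤ strongSlope φ S x) :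
    LocErrBoundFun (fun x => (ENNReal.ofReal σ)⁻¹ * φ x) (S ∩ φ ⁻¹' {0}) S xb := by
  refine ⟨ρ / 4, by positivity, fun x hx => ?_, fun x hx => ?_⟩
  · by_cases htop : φ x = ⊤
    · simp [htop, ENNReal.mul_top]
    have hdist : infDist x (S ∩ φ ⁻¹' {0}) ≤ (φ x).toReal / σ := by
      refine le_of_forall_gt_imp_ge_of_dense fun lam hlam => ?_
      rcases le_or_gt (ρ / 4) lam with hρlam | hlamρ
      · exact (infDist_le_dist_of_mem (s := S ∩ φ ⁻¹' {0}) ⟨hxb, hφxb⟩).trans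
          ((mem_closedBall.1 hx.1).trans hρlam)
      obtain ⟨y, hyS, hy0, hyx⟩ := exists_zero_near_of_le_strongSlope hS hσ hφ hslope hx htop
        ((div_lt_iff₀' hσ).1 hlam) hlamρ.le
      exact (infDist_le_dist_of_mem (s := S ∩ φ ⁻¹' {0}) ⟨hyS, hy0⟩).trans (dist_comm x y ▸ hyx)
    calc ENNReal.ofReal (infDist x (S ∩ φ ⁻¹' {0})) ≤ ENNReal.ofReal ((φ x).toReal / σ) :=
          ENNReal.ofReal_le_ofReal hdist
      _ = (ENNReal.ofReal σ)⁻¹ * φ x := by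
          rw [ENNReal.ofReal_div_of_pos hσ, ENNReal.ofReal_toReal htop, ENNReal.div_eq_inv_mul]
  · simp [show φ x = 0 from hx.2, infDist_zero_of_mem hx]

end ErrorBound

lemma LscAt.lowerSemicontinuousAt_iSup {X Z γ : Type*} [TopologicalSpace X] [TopologicalSpace Z]
    [CompleteLinearOrder γ] {G : X → Set Z} {x : X} (hG : LscAt G x) {f : Z → γ}
    (hf : LowerSemicontinuous f) : LowerSemicontinuousAt (fun u => ⨆ z ∈ G u, f z) x := by
  intro c hc
  obtain ⟨z, hzG, hz⟩ := lt_biSup_iff.1 hc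
  obtain ⟨U, hU, hUG⟩ := hG _ (hf.isOpen_preimage c) ⟨z, hzG, hz⟩
  filter_upwards [hU] with u hu
  obtain ⟨w, hwG, hw⟩ := hUG u hu
  exact lt_biSup_iff.2 ⟨w, hwG, hw⟩

lemma merit_eq_zero_iff {X Z : Type*} [SeminormedAddCommGroup Z] {G : X → Set Z} {C : Set Z}
    (hC : IsClosed C) (hCne : C.Nonempty) (x : X) : merit G C x = 0 ↔ G x ⊆ C := by
  simp [merit, subset_def, hC.mem_iff_infDist_zero hCne, infDist_nonneg.ge_iff_eq']

theorem statement_2_general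
    {X Z : Type*} [NormedAddCommGroup X] [CompleteSpace X] [NormedAddCommGroup Z]
    (S : Set X) (hScl : IsClosed S) (C : Set Z) (hCcl : IsClosed C) (hC0 : (0:Z) ∈ C)
    (G : X → Set Z) (xb : X) (hxbS : xb ∈ S) (hxbG : G xb ⊆ C)
    (hlsc : LscAround G xb)
    (σ r : ℝ) (hσ : 0 < σ) (hr : 0 < r)
    (hslope : ∀ x ∈ Metric.closedBall xb r ∩ S, merit G C x ≠ 0 →
      ENNReal.ofReal σ ≤ strongSlope (merit G C) S x) :
    LocErrBoundFun (fun x => (ENNReal.ofReal σ)⁻¹ * merit G C x)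
      (S ∩ {x | G x ⊆ C}) S xb := by
  obtain ⟨ρ, hρ, hlscB⟩ := hlsc
  have hzero := merit_eq_zero_iff (G := G) hCcl ⟨0, hC0⟩
  have hR : S ∩ {x | G x ⊆ C} = S ∩ merit G C ⁻¹' {0} := by
    ext x; simp [hzero]
  have hmerit : LowerSemicontinuousOn (merit G C) (S ∩ closedBall xb (min r ρ)) := fun x hx =>
    ((hlscB x (closedBall_subset_closedBall (min_le_right r ρ) hx.2)).lowerSemicontinuousAt_iSup
      ((ENNReal.continuous_ofReal.comp (continuous_infDist_pt C)).lowerSemicontinuous)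
      ).lowerSemicontinuousWithinAt _
  rw [hR]
  exact locErrBoundFun_of_le_strongSlope hScl hxbS ((hzero xb).2 hxbG) hσ (lt_min hr hρ) hmerit
    fun x hx => hslope x ⟨closedBall_subset_closedBall (min_le_left r ρ) hx.1, hx.2⟩

/-- the merit function rescaled by `σ⁻¹` is a local error bound function. -/
theorem statement_2
    {X Z : Type*} [NormedAddCommGroup X] [NormedSpace ℝ X] [CompleteSpace X]
    [NormedAddCommGroup Z] [NormedSpace ℝ Z] [CompleteSpace Z]
    (S : Set X) (hSne : S.Nonempty) (hScl : IsClosed S)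
    (C : Set Z) (hCcl : IsClosed C) (hCconv : Convex ℝ C)
    (hCcone : ∀ t : ℝ, 0 < t → ∀ z ∈ C, t • z ∈ C) (hC0 : (0:Z) ∈ C)
    (hCne0 : C ≠ {0}) (hCneuniv : C ≠ Set.univ)
    (G : X → Set Z) (hG : ∀ x, (G x).Nonempty)
    (xb : X) (hxbS : xb ∈ S) (hxbG : G xb ⊆ C)
    (hlsc : LscAround G xb)
    (σ r : ℝ) (hσ : 0 < σ) (hr : 0 < r)
    (hslope : ∀ x ∈ Metric.closedBall xb r ∩ S, merit G C x ≠ 0 →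
      ENNReal.ofReal σ ≤ strongSlope (merit G C) S x) :
    LocErrBoundFun (fun x => (ENNReal.ofReal σ)⁻¹ * merit G C x)
      (S ∩ {x | G x ⊆ C}) S xb :=
  statement_2_general S hScl C hCcl hC0 G xb hxbS hxbG hlsc σ r hσ hr hslope
end

section
/- Let X, Y, Z be real Banach spaces, K ⊆ Y a convex cone with nonempty interior, S ⊆ X a nonempty closed set, C ⊆ Z a proper closed convex cone with C ≠ {0}, f : X → Y, and G : X ⇉ Z with G(x) ≠ ∅ for all x. Let ν(x) = sup_{z ∈ G(x)} dist(z,C), R = S ∩ {x : G(x) ⊆ C}, and let x̄ ∈ R be a locally weakly efficient solution of minimizing f over R. Suppose that (i) f is K-Lipschitz near x̄ with constant ℓ_f and vector e ∈ int K ∩ B(0,1), and f is directionally differentiable at x̄; (ii) G is lower semicontinuous at every point of some ball around x̄ and is metrically C-increasing around x̄ relative to S; (iii) the Fréchet upper subdifferential ∂̂⁺ν(x̄) is nonempty. Then for every α ∈ (1, inc_C(G,S,x̄)), every ℓ ≥ ℓ_f, and every x* ∈ ∂̂⁺ν(x̄), one has f′(x̄; v) + (ℓ/(α−1))⟨x*,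 v⟩ e ∉ −int K for all v in the feasible direction cone I(S, x̄). -/
open Filter Topology Metric Set Pointwise
open scoped ENNReal NNReal

/-!
Since `ν ≥ 0 = ν x̄`, every Fréchet upper subgradient of `ν` at `x̄` vanishes; what remains is
`f'(x̄; v) ∉ -int K`, knowing that `ν(x) = o(‖x - x̄‖)`. Metric `C`-increase with rate `α > 1`
turns this into an error bound: for convex `C` the distance to `C` grows at unit rate away from
`C`, so a single step of size about `ν(x) / (α - 1)` leads from `x ∈ S` to a feasible point. Hence
the points `x̄ + t v` (`v` a feasible direction) are `o(t)`-close to feasible points `z_t`. If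
`-f'(x̄; v) ∈ int K`, the `K`-Lipschitz estimate then puts `f(x̄) - f(z_t)` in `int K` for small
`t`, contradicting weak efficiency.
-/

theorem infDist_le_infDist_add_of_forall_le {α : Type*} [PseudoMetricSpace α] {C A : Set α}
    (hA : A.Nonempty) {b : ℝ} (h : ∀ y ∈ A, infDist y C ≤ b) (p : α) :
    infDist p C ≤ infDist p A + b := by
  have : infDist p C - b ≤ infDist p A := (le_infDist hA).2 fun y hy => by
    linarith [infDist_le_infDist_add_dist (x := p) (y := y) (s := C), h y hy]
  linarith

section InfDist

variable {E : Type*} [NormedAddCommGroup E] {C : Set E}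

theorem infDist_add_le_infDist_of_add_subset (hC : C + C ⊆ C) {c : E} (hc : c ∈ C) (u : E) :
    infDist (u + c) C ≤ infDist u C :=
  (le_infDist ⟨c, hc⟩).2 fun c' hc' => by
    simpa using infDist_le_dist_of_mem (x := u + c) (hC (add_mem_add hc' hc))

variable [NormedSpace ℝ E]

theorem Convex.mul_infDist_le_infDist_homothety (hC : Convex ℝ C) {c w : E} (hc : c ∈ C) {t : ℝ}
    (ht : 1 ≤ t) : t * infDist w C ≤ infDist (c + t • (w - c)) C := by
  have ht0 : 0 < t := by linarith
  refine (le_infDist ⟨c, hc⟩).2 fun c' hc' => ?_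
  have hmem : c + t⁻¹ • (c' - c) ∈ C :=
    hC.add_smul_sub_mem hc hc' ⟨inv_nonneg.2 ht0.le, inv_le_one_of_one_le₀ ht⟩
  have hsub : w - (c + t⁻¹ • (c' - c)) = t⁻¹ • (c + t • (w - c) - c') := by
    rw [smul_sub t⁻¹ (c + _), smul_add, smul_smul, inv_mul_cancel₀ ht0.ne', one_smul]
    module
  have := infDist_le_dist_of_mem (x := w) hmem
  rw [dist_eq_norm, hsub, norm_smul, norm_inv, Real.norm_of_nonneg ht0.le, ← dist_eq_norm]
    at this
  rwa [le_inv_mul_iff₀ ht0] at this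

theorem Convex.infDist_add_le_of_forall_mem_closedBall (hC : Convex ℝ C) {w : E} {s a : ℝ}
    (hw : 0 < infDist w C) (hs : 0 ≤ s) (h : ∀ p ∈ closedBall w s, infDist p C ≤ a) :
    infDist w C + s ≤ a := by
  set d := infDist w C
  have hCne : C.Nonempty := nonempty_iff_ne_empty.2 fun hC0 => by simp [d, hC0] at hw
  -- pushing `w` away from `c ∈ C` by `s` multiplies the distance to `C` by `1 + s / ‖w - c‖`
  have key : ∀ c ∈ C, d * s ≤ (a - d) * dist w c := by
    intro c hc
    have hD : 0 < dist w c := hw.trans_le (infDist_le_dist_of_mem hc)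
    have hp : c + (1 + s / dist w c) • (w - c) ∈ closedBall w s := by
      rw [mem_closedBall, dist_eq_norm, show c + (1 + s / dist w c) • (w - c) - w
        = (s / dist w c) • (w - c) by module, norm_smul, ← dist_eq_norm,
        Real.norm_of_nonneg (by positivity), div_mul_cancel₀ _ hD.ne']
    have := (hC.mul_infDist_le_infDist_homothety hc (le_add_of_nonneg_right (by positivity) :
      (1 : ℝ) ≤ 1 + s / dist w c)).trans (h _ hp)
    rw [add_mul, one_mul, div_mul_eq_mul_div, ← le_sub_iff_add_le', div_le_iff₀ hD] at this
    linarith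
  have had : d ≤ a := h w (mem_closedBall_self hs)
  suffices d * s ≤ (a - d) * d by nlinarith
  rcases had.eq_or_lt with hda | hda
  · obtain ⟨c, hc⟩ := hCne
    simpa [hda] using key c hc
  · rw [mul_comm (a - d), ← div_le_iff₀ (sub_pos.2 hda)]
    exact (le_infDist hCne).2 fun c hc => by
      rw [div_le_iff₀ (sub_pos.2 hda), mul_comm (dist w c)]; exact key c hc

end InfDist

section ConvexCone

variable {E : Type*} [AddCommGroup E] [Module ℝ E] {K : Set E}

theorem Convex.add_subset_self (hK : Convex ℝ K)
    (hcone : ∀ t : ℝ, 0 < t → ∀ y ∈ K, t • y ∈ K) : K + K ⊆ K := by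
  rintro _ ⟨a, ha, b, hb, rfl⟩
  have := hcone 2 two_pos _ (hK ha hb (by norm_num) (by norm_num) (add_halves 1))
  rwa [smul_add, smul_smul, smul_smul, mul_one_div_cancel two_ne_zero, one_smul, one_smul]
    at this

theorem smul_add_mem_interior [TopologicalSpace E] [ContinuousAdd E] [ContinuousSMul ℝ E]
    (hK : Convex ℝ K) (hcone : ∀ t : ℝ, 0 < t → ∀ y ∈ K, t • y ∈ K) {t : ℝ} (ht : 0 < t)
    {y k : E} (hy : y ∈ interior K) (hk : k ∈ K) : t • y + k ∈ interior K := by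
  refine interior_maximal ?_ ((isOpen_interior.smul₀ ht.ne').add_right)
    (add_mem_add (smul_mem_smul_set hy) hk)
  rintro _ ⟨_, ⟨y', hy', rfl⟩, k', hk', rfl⟩
  exact hK.add_subset_self hcone (add_mem_add (hcone t ht y' (interior_subset hy')) hk')

end ConvexCone

section Merit

variable {X Z : Type*} [NormedAddCommGroup Z] {G : X → Set Z} {C : Set Z}

theorem merit_eq_zero_of_subset {x : X} (hx : G x ⊆ C) : merit G C x = 0 :=
  le_antisymm (iSup₂_le fun _ hz => by simp [infDist_zero_of_mem (hx hz)]) zero_le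

theorem infDist_le_of_merit_le {x : X} {u : Z} (hu : u ∈ G x) {b : ℝ} (hb : 0 ≤ b)
    (h : merit G C x ≤ ENNReal.ofReal b) : infDist u C ≤ b :=
  (ENNReal.ofReal_le_ofReal_iff hb).1 ((le_iSup₂ (f := fun z (_ : z ∈ G x) =>
    ENNReal.ofReal (infDist z C)) u hu).trans h)

end Merit

namespace MetIncrWith

variable {X Z : Type*} [NormedAddCommGroup X] [NormedAddCommGroup Z] [NormedSpace ℝ Z]
  {G : X → Set Z} {S : Set X} {C : Set Z} {xb : X} {α δ : ℝ}

theorem exists_mem_upperInv (hmi : MetIncrWith G S C xb α δ) (hα : 1 ≤ α) (hCcl : IsClosed C)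
    (hCconv : Convex ℝ C) (hCadd : C + C ⊆ C) (hCne : C.Nonempty) {x : X}
    (hx : x ∈ closedBall xb δ ∩ S) (hGx : (G x).Nonempty) {r : ℝ} (hr : r ∈ Ioo 0 δ)
    (hν : merit G C x ≤ ENNReal.ofReal ((α - 1) * r)) :
    ∃ z ∈ closedBall x r ∩ S, z ∈ upperInv G C := by
  obtain ⟨z, hz, hincl⟩ := hmi x hx r hr
  refine ⟨z, hz, fun w hw => by_contra fun hwC => ?_⟩
  have hd : 0 < infDist w C := (hCcl.notMem_iff_infDist_pos hCne).1 hwC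
  have hb : (0 : ℝ) ≤ (α - 1) * r := mul_nonneg (sub_nonneg.2 hα) hr.1.le
  have hGC : ∀ y ∈ G x + C, infDist y C ≤ (α - 1) * r := by
    rintro _ ⟨u, hu, c, hc, rfl⟩
    exact (infDist_add_le_infDist_of_add_subset hCadd hc u).trans
      (infDist_le_of_merit_le hu hb hν)
  have hball : ∀ p ∈ closedBall w (α * r), infDist p C ≤ α * r := fun p hp => by
    have hp' : infDist p (G x + C) ≤ r :=
      hincl ((infDist_le_dist_of_mem hw).trans (mem_closedBall.1 hp))
    linarith [infDist_le_infDist_add_of_forall_le (hGx.add hCne) hGC p]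
  have := hCconv.infDist_add_le_of_forall_mem_closedBall hd
    (mul_nonneg (by linarith) hr.1.le) hball
  linarith

theorem eventually_exists_mem_upperInv (hmi : MetIncrWith G S C xb α δ) (hα : 1 < α)
    (hδ : 0 < δ) (hCcl : IsClosed C) (hCconv : Convex ℝ C) (hCadd : C + C ⊆ C)
    (hCne : C.Nonempty) (hG : ∀ x, (G x).Nonempty) (hxb : G xb ⊆ C)
    (hν : ∀ ε > 0, ∀ᶠ x in 𝓝 xb, merit G C x ≤ ENNReal.ofReal (ε * ‖x - xb‖))
    {ε : ℝ} (hε : 0 < ε) :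
    ∀ᶠ x in 𝓝 xb, x ∈ S → ∃ z ∈ S ∩ upperInv G C, ‖z - x‖ ≤ ε * ‖x - xb‖ := by
  have hsmall : ∀ᶠ x in 𝓝 xb, ε * ‖x - xb‖ < δ :=
    Tendsto.eventually_lt_const hδ <| by
      simpa using ((continuous_id.sub (continuous_const (y := xb))).norm.const_mul ε).tendsto xb
  filter_upwards [hν ((α - 1) * ε) (mul_pos (sub_pos.2 hα) hε), closedBall_mem_nhds xb hδ,
    hsmall] with x hνx hxδ hxr hxS
  rcases eq_or_ne x xb with rfl | hne
  · exact ⟨x, ⟨hxS, hxb⟩, by simp⟩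
  have hr : 0 < ε * ‖x - xb‖ := mul_pos hε (norm_pos_iff.2 (sub_ne_zero.2 hne))
  obtain ⟨z, ⟨hzx, hzS⟩, hz⟩ := hmi.exists_mem_upperInv hα.le hCcl hCconv hCadd hCne
    ⟨hxδ, hxS⟩ (hG x) ⟨hr, hxr⟩ (by rwa [← mul_assoc])
  exact ⟨z, ⟨hzS, hz⟩, by rwa [← dist_eq_norm, ← mem_closedBall]⟩

end MetIncrWith

section UpperSubdiff

variable {X : Type*} [NormedAddCommGroup X] [NormedSpace ℝ X] {φ : X → ℝ≥0∞} {xb : X}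

theorem neg_apply_le_of_mem_FUpperSubdiff (hφ : φ xb = 0) {p : X →L[ℝ] ℝ}
    (hp : p ∈ FUpperSubdiff φ xb) {ε : ℝ} (hε : 0 < ε) :
    ∃ δ > 0, ∀ h ∈ ball (0 : X) δ, -p h ≤ ε * ‖h‖ := by
  obtain ⟨δ, hδ, H⟩ := hp ε hε
  refine ⟨δ, hδ, fun h hh => ?_⟩
  rcases eq_or_ne h 0 with rfl | h0
  · simp
  have := (H (xb + h) (by simpa using hh) (by simpa using h0)).2
  rw [hφ, add_sub_cancel_left, ENNReal.toReal_zero, sub_zero] at this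
  linarith [ENNReal.toReal_nonneg (a := φ (xb + h))]

theorem eq_zero_of_mem_FUpperSubdiff (hφ : φ xb = 0) {p : X →L[ℝ] ℝ}
    (hp : p ∈ FUpperSubdiff φ xb) : p = 0 := by
  refine norm_le_zero_iff.1 (le_of_forall_pos_le_add fun ε hε => ?_)
  obtain ⟨δ, hδ, H⟩ := neg_apply_le_of_mem_FUpperSubdiff hφ hp hε
  rw [zero_add]
  refine p.opNorm_le_of_ball hδ hε.le fun h hh => abs_le.2 ⟨?_, ?_⟩
  · linarith [H h hh]
  · have := H (-h) (by simpa using hh)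
    rw [map_neg, neg_neg, norm_neg] at this
    exact this

theorem eventually_le_ofReal_of_zero_mem_FUpperSubdiff (hφ : φ xb = 0)
    (h0 : 0 ∈ FUpperSubdiff φ xb) {ε : ℝ} (hε : 0 < ε) :
    ∀ᶠ x in 𝓝 xb, φ x ≤ ENNReal.ofReal (ε * ‖x - xb‖) := by
  obtain ⟨δ, hδ, H⟩ := h0 ε hε
  filter_upwards [ball_mem_nhds xb hδ] with x hx
  rcases eq_or_ne x xb with rfl | hne
  · simp [hφ]
  obtain ⟨hfin, hle⟩ := H x hx hne
  rw [hφ, ENNReal.toReal_zero, zero_apply, sub_zero, sub_zero] at hle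
  exact (ENNReal.le_ofReal_iff_toReal_le hfin (by positivity)).2 hle

end UpperSubdiff

theorem eventually_exists_near_ray {X : Type*} [NormedAddCommGroup X] [NormedSpace ℝ X]
    {S R : Set X} {xb v : X}
    (hR : ∀ ε > 0, ∀ᶠ x in 𝓝 xb, x ∈ S → ∃ z ∈ R, ‖z - x‖ ≤ ε * ‖x - xb‖)
    (hv : v ∈ feasDirCone S xb) {ε : ℝ} (hε : 0 < ε) :
    ∀ᶠ t in 𝓝[>] (0 : ℝ), ∃ z ∈ R, ‖z - (xb + t • v)‖ ≤ ε * t := by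
  obtain ⟨δ, hδ, hS⟩ := hv
  have hray : Tendsto (fun t : ℝ => xb + t • v) (𝓝[>] 0) (𝓝 xb) :=
    tendsto_nhdsWithin_of_tendsto_nhds (by
      simpa using (continuous_const.add (continuous_id.smul continuous_const)).tendsto
        (0 : ℝ) (f := fun t : ℝ => xb + t • v))
  have hε' : 0 < ε / (‖v‖ + 1) := by positivity
  filter_upwards [hray.eventually (hR _ hε'), Ioo_mem_nhdsGT hδ] with t ht htδ
  obtain ⟨z, hzR, hz⟩ := ht (hS t htδ)
  refine ⟨z, hzR, hz.trans ?_⟩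
  rw [add_sub_cancel_left, norm_smul, Real.norm_of_nonneg htδ.1.le]
  calc ε / (‖v‖ + 1) * (t * ‖v‖) = ε * t * (‖v‖ / (‖v‖ + 1)) := by ring
    _ ≤ ε * t := mul_le_of_le_one_right (by nlinarith [htδ.1])
      (div_le_one_of_le₀ (by linarith) (by positivity))

theorem sub_mem_interior_of_inv_smul_near {Y : Type*} [NormedAddCommGroup Y] [NormedSpace ℝ Y]
    {K : Set Y} (hK : Convex ℝ K) (hcone : ∀ t : ℝ, 0 < t → ∀ y ∈ K, t • y ∈ K) {d e u w : Y}
    {ρ t s : ℝ} (hball : ball (-d) ρ ⊆ interior K) (ht : 0 < t) (hs : 0 ≤ s)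
    (hu : ‖t⁻¹ • u - d‖ < ρ / 2) (hse : s * ‖e‖ ≤ t * (ρ / 2)) (hw : w + s • e ∈ K) :
    w - u ∈ interior K := by
  set y := -d - ((t⁻¹ • u - d) + (s / t) • e)
  have hy : y ∈ interior K := hball (by
    rw [mem_ball, dist_eq_norm, show y - -d = -((t⁻¹ • u - d) + (s / t) • e) by
      simp only [y]; abel, norm_neg]
    calc _ ≤ ‖t⁻¹ • u - d‖ + ‖(s / t) • e‖ := norm_add_le _ _
      _ < ρ / 2 + ρ / 2 := by
        have : s * ‖e‖ / t ≤ ρ / 2 := by rw [div_le_iff₀ ht]; linarith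
        rw [norm_smul, Real.norm_of_nonneg (by positivity), div_mul_eq_mul_div]
        linarith
      _ = ρ := add_halves ρ)
  have hsplit : w - u = t • y + (w + s • e) := by
    rw [smul_sub, smul_add, smul_sub, smul_inv_smul₀ ht.ne', smul_smul,
      mul_div_cancel₀ _ ht.ne']
    module
  exact hsplit ▸ smul_add_mem_interior hK hcone ht hy hw

theorem LocWeakEffOn.neg_notMem_interior {X Y : Type*} [NormedAddCommGroup X]
    [NormedSpace ℝ X] [NormedAddCommGroup Y] [NormedSpace ℝ Y] {f : X → Y} {R : Set X}
    {K : Set Y} {xb v : X} {d e : Y} {ℓ : ℝ} (hweff : LocWeakEffOn f R K xb)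
    (hK : Convex ℝ K) (hcone : ∀ t : ℝ, 0 < t → ∀ y ∈ K, t • y ∈ K) (hℓ : 0 ≤ ℓ)
    (hLip : KLipschitzNearWith f K xb ℓ e) (hd : HasDirDerivAt f xb v d)
    (hR : ∀ ε > 0, ∀ᶠ t in 𝓝[>] (0 : ℝ), ∃ z ∈ R, ‖z - (xb + t • v)‖ ≤ ε * t) :
    -d ∉ interior K := by
  intro hdK
  obtain ⟨ρ, hρ, hball⟩ := Metric.isOpen_iff.1 isOpen_interior _ hdK
  obtain ⟨δL, hδL, hL⟩ := hLip
  obtain ⟨δw, hδw, hw⟩ := hweff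
  set ε := ρ / (2 * (ℓ * ‖e‖ + 1))
  have hε : 0 < ε := by positivity
  have hdiff : ∀ᶠ t in 𝓝[>] (0 : ℝ), ‖t⁻¹ • (f (xb + t • v) - f xb) - d‖ < ρ / 2 := by
    simpa [dist_eq_norm] using Metric.tendsto_nhds.1 hd _ (half_pos hρ)
  have hnear : ∀ᶠ t in 𝓝[>] (0 : ℝ), t * (‖v‖ + ε) < min δL δw :=
    tendsto_nhdsWithin_of_tendsto_nhds
      (by simpa using (tendsto_id (x := 𝓝 (0 : ℝ))).mul_const (‖v‖ + ε))
      |>.eventually_lt_const (lt_min hδL hδw)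
  obtain ⟨t, ht : 0 < t, hdt, hnt, z, hzR, hz⟩ := ((eventually_mem_nhdsWithin (a := (0 : ℝ))
    (s := Ioi 0)).and (hdiff.and (hnear.and (hR ε hε)))).exists
  set x := xb + t • v
  have hx : ‖x - xb‖ = t * ‖v‖ := by
    rw [add_sub_cancel_left, norm_smul, Real.norm_of_nonneg ht.le]
  have hzxb : ‖z - xb‖ ≤ t * (‖v‖ + ε) := by
    calc ‖z - xb‖ ≤ ‖z - x‖ + ‖x - xb‖ := norm_sub_le_norm_sub_add_norm_sub _ _ _
      _ ≤ t * (‖v‖ + ε) := by rw [hx]; linarith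
  have hxL : x ∈ closedBall xb δL := by
    rw [mem_closedBall, dist_eq_norm, hx]
    nlinarith [min_le_left δL δw, ht.le]
  have hzL : z ∈ closedBall xb δL := by
    rw [mem_closedBall, dist_eq_norm]; linarith [min_le_left δL δw]
  have hzw : z ∈ closedBall xb δw := by
    rw [mem_closedBall, dist_eq_norm]; linarith [min_le_right δL δw]
  have hse : ℓ * ‖x - z‖ * ‖e‖ ≤ t * (ρ / 2) :=
    calc ℓ * ‖x - z‖ * ‖e‖ ≤ ℓ * (ε * t) * ‖e‖ := by
          gcongr; rw [norm_sub_rev]; exact hz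
      _ = t * (ρ / 2) * (ℓ * ‖e‖ / (ℓ * ‖e‖ + 1)) := by simp only [ε]; field_simp
      _ ≤ t * (ρ / 2) := mul_le_of_le_one_right (by positivity)
        (div_le_one_of_le₀ (by linarith) (by positivity))
  refine hw z ⟨hzR, hzw⟩ ?_
  simpa using sub_mem_interior_of_inv_smul_near hK hcone hball ht
    (mul_nonneg hℓ (norm_nonneg _)) hdt hse (hL x hxL z hzL)

theorem statement_6_general
    {X Y Z : Type*} [NormedAddCommGroup X] [NormedSpace ℝ X]
    [NormedAddCommGroup Y] [NormedSpace ℝ Y]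
    [NormedAddCommGroup Z] [NormedSpace ℝ Z]
    (K : Set Y) (hKconv : Convex ℝ K)
    (hKcone : ∀ t : ℝ, 0 < t → ∀ y ∈ K, t • y ∈ K)
    (S : Set X)
    (C : Set Z) (hCcl : IsClosed C) (hCconv : Convex ℝ C)
    (hCcone : ∀ t : ℝ, 0 < t → ∀ z ∈ C, t • z ∈ C) (hC0 : (0:Z) ∈ C)
    (f : X → Y) (G : X → Set Z) (hG : ∀ x, (G x).Nonempty)
    (xb : X) (hxbG : G xb ⊆ C)
    (hweff : LocWeakEffOn f (S ∩ {x | G x ⊆ C}) K xb)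
    (ℓf : ℝ) (hℓf : 0 < ℓf) (e : Y)
    (hLip : KLipschitzNearWith f K xb ℓf e)
    (f' : X → Y) (hf' : ∀ v, HasDirDerivAt f xb v (f' v))
    (hmi : MetIncr G S C xb) :
    ∀ α : ℝ, 1 < α → ENNReal.ofReal α < incrBound G S C xb →
    ∀ ℓ : ℝ, ℓf ≤ ℓ →
    ∀ q ∈ FUpperSubdiff (merit G C) xb,
    ∀ v ∈ feasDirCone S xb,
      -(f' v + (ℓ / (α - 1) * q v) • e) ∉ interior K := by
  intro α _ _ ℓ _ q hq v hv
  have hν0 : merit G C xb = 0 := merit_eq_zero_of_subset hxbG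
  obtain rfl : q = 0 := eq_zero_of_mem_FUpperSubdiff hν0 hq
  rw [zero_apply, mul_zero, zero_smul, add_zero]
  obtain ⟨α', hα', δ, hδ, hinc⟩ := hmi
  have hR := fun ε (hε : 0 < ε) => hinc.eventually_exists_mem_upperInv hα' hδ hCcl hCconv
    (hCconv.add_subset_self hCcone) ⟨0, hC0⟩ hG hxbG
    (fun _ hε' => eventually_le_ofReal_of_zero_mem_FUpperSubdiff hν0 hq hε') hε
  exact hweff.neg_notMem_interior hKconv hKcone hℓf.le hLip (hf' v)
    fun _ hε => eventually_exists_near_ray hR hv hε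

/-- weak efficiency condition via penalization. -/
theorem statement_6
    {X Y Z : Type*} [NormedAddCommGroup X] [NormedSpace ℝ X] [CompleteSpace X]
    [NormedAddCommGroup Y] [NormedSpace ℝ Y] [CompleteSpace Y]
    [NormedAddCommGroup Z] [NormedSpace ℝ Z] [CompleteSpace Z]
    (K : Set Y) (hKconv : Convex ℝ K)
    (hKcone : ∀ t : ℝ, 0 < t → ∀ y ∈ K, t • y ∈ K) (hKint : (interior K).Nonempty)
    (S : Set X) (hSne : S.Nonempty) (hScl : IsClosed S)
    (C : Set Z) (hCcl : IsClosed C) (hCconv : Convex ℝ C)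
    (hCcone : ∀ t : ℝ, 0 < t → ∀ z ∈ C, t • z ∈ C) (hC0 : (0:Z) ∈ C)
    (hCne0 : C ≠ {0}) (hCneuniv : C ≠ Set.univ)
    (f : X → Y) (G : X → Set Z) (hG : ∀ x, (G x).Nonempty)
    (xb : X) (hxbS : xb ∈ S) (hxbG : G xb ⊆ C)
    (hweff : LocWeakEffOn f (S ∩ {x | G x ⊆ C}) K xb)
    (ℓf : ℝ) (hℓf : 0 < ℓf) (e : Y) (he : e ∈ interior K) (hnorme : ‖e‖ ≤ 1)
    (hLip : KLipschitzNearWith f K xb ℓf e)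
    (f' : X → Y) (hf' : ∀ v, HasDirDerivAt f xb v (f' v))
    (hlsc : LscAround G xb) (hmi : MetIncr G S C xb)
    (hsubne : (FUpperSubdiff (merit G C) xb).Nonempty) :
    ∀ α : ℝ, 1 < α → ENNReal.ofReal α < incrBound G S C xb →
    ∀ ℓ : ℝ, ℓf ≤ ℓ →
    ∀ q ∈ FUpperSubdiff (merit G C) xb,
    ∀ v ∈ feasDirCone S xb,
      -(f' v + (ℓ / (α - 1) * q v) • e) ∉ interior K :=
  statement_6_general K hKconv hKcone S C hCcl hCconv hCcone hC0 f G hG xb hxbG hweff ℓf hℓf e hLip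
    f' hf' hmi
end

section
/- Let X, Y, Z be real Banach spaces, K ⊆ Y a convex cone with nonempty interior, S ⊆ X a nonempty closed set, C ⊆ Z a proper closed convex cone with C ≠ {0}, f : X → Y, and G : X ⇉ Z with G(x) ≠ ∅ for all x. Let ν(x) = sup_{z ∈ G(x)} dist(z,C), R = S ∩ {x : G(x) ⊆ C}, and let x̄ ∈ R be a locally weakly efficient solution of minimizing f over R. Suppose that: (i) S is locally convex around x̄; (ii) f is K-Lipschitz near x̄ with constant ℓ_f and vector e ∈ int K ∩ B(0,1), and f is directionally differentiable at x̄ with v ↦ f′(x̄;v) K-sublinear on X; (iii) G is lower semicontinuous at every point of some ball around x̄ and metrically C-increasing around x̄ relative to S; (iv) G is C-bounded around x̄ and Hausdorff upper semicontinuous at x̄; (v) G is C-concave on X. Then ν is directionally differentiable at x̄, and for every α ∈ (1, inc_C(G,S,x̄)) and ℓ ≥ ℓ_f there exists y* ∈ K⁺ \ {0} such that ⟨y*, f′(x̄;v)⟩ + (ℓ/(α−1)) ν′(x̄;v) ⟨y*, e⟩ ≥ 0 for all v in the feasible direction cone I(S,x̄). -/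
open Filter Topology Metric Set Pointwise
open scoped ENNReal NNReal

/-!
Since `G` is `C`-concave and `C` is a convex cone, the merit function `ν` is convex, finite near
`xb` and zero at `xb`; its difference quotients along a ray are therefore monotone, which gives the
directional derivative `ν'` and makes it convex. Metric `C`-increase with rate `α` yields the error
bound `d(x, R) ≤ ν(x) / (α - 1)` on `S` near `xb`, so, `f` being `K`-Lipschitz, `xb` stays locally
weakly efficient for the penalized map `f + (ℓ / (α - 1)) ν e` on `S`. Differentiating along
feasible directions, no `F v = f'(v) + (ℓ / (α - 1)) ν'(v) e` lies in `-int K`; as `F` is `K`-convex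
and `I(S, xb)` is convex, the set `F(I(S, xb)) + int K` is convex, open and misses `0`, and a
separating functional is the required `y* ∈ K⁺ \ {0}`.
-/

def ConvexCone.ofConvex {Y : Type*} [AddCommGroup Y] [Module ℝ Y] {K : Set Y}
    (hconv : Convex ℝ K) (hcone : ∀ t : ℝ, 0 < t → ∀ y ∈ K, t • y ∈ K) : ConvexCone ℝ Y where
  carrier := K
  smul_mem' t ht y hy := hcone t ht y hy
  add_mem' a ha b hb := by
    simpa [smul_add, smul_smul] using
      hcone 2 two_pos _ (hconv ha hb one_half_pos.le one_half_pos.le (add_halves 1))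

namespace ConvexCone

variable {Y : Type*} [AddCommGroup Y] [Module ℝ Y] (K : ConvexCone ℝ Y) {k e : Y} {c : ℝ}

theorem add_smul_mem (hk : k ∈ K) (he : e ∈ K) (hc : 0 ≤ c) : k + c • e ∈ K := by
  rcases hc.eq_or_lt with rfl | hc
  · simpa using hk
  · exact K.add_mem hk (K.smul_mem hc he)

variable [TopologicalSpace Y]

theorem add_mem_interior [ContinuousAdd Y] {a b : Y} (ha : a ∈ interior (K : Set Y))
    (hb : b ∈ K) : a + b ∈ interior (K : Set Y) :=
  interior_maximal (by rintro _ ⟨y, hy, rfl⟩; exact K.add_mem (interior_subset hy) hb)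
    ((Homeomorph.addRight b).isOpenMap _ isOpen_interior) ⟨a, ha, rfl⟩

theorem smul_mem_interior [ContinuousConstSMul ℝ Y] {a : Y} (hc : 0 < c)
    (ha : a ∈ interior (K : Set Y)) : c • a ∈ interior (K : Set Y) :=
  interior_maximal (by rintro _ ⟨y, hy, rfl⟩; exact K.smul_mem hc (interior_subset hy))
    (isOpen_interior.smul₀ hc.ne') (smul_mem_smul_set ha)

theorem add_smul_mem_interior [ContinuousAdd Y] (hk : k ∈ interior (K : Set Y)) (he : e ∈ K)
    (hc : 0 ≤ c) : k + c • e ∈ interior (K : Set Y) := by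
  rcases hc.eq_or_lt with rfl | hc
  · simpa using hk
  · exact K.add_mem_interior hk (K.smul_mem hc he)

end ConvexCone

section InfDist

variable {Z : Type*} [NormedAddCommGroup Z] [NormedSpace ℝ Z]

theorem Convex.convexOn_infDist {C : Set Z} (hC : Convex ℝ C) (hne : C.Nonempty) :
    ConvexOn ℝ univ (infDist · C) := by
  refine ⟨convex_univ, fun z₁ _ z₂ _ a b ha hb hab => le_of_forall_pos_le_add fun ε hε => ?_⟩
  obtain ⟨c₁, hc₁, hz₁⟩ := (infDist_lt_iff hne).1 (lt_add_of_pos_right (infDist z₁ C) hε)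
  obtain ⟨c₂, hc₂, hz₂⟩ := (infDist_lt_iff hne).1 (lt_add_of_pos_right (infDist z₂ C) hε)
  calc infDist (a • z₁ + b • z₂) C ≤ dist (a • z₁ + b • z₂) (a • c₁ + b • c₂) :=
        infDist_le_dist_of_mem (hC hc₁ hc₂ ha hb hab)
    _ ≤ a * dist z₁ c₁ + b * dist z₂ c₂ := by
        refine (dist_add_add_le _ _ _ _).trans ?_
        rw [dist_smul₀, dist_smul₀, Real.norm_of_nonneg ha, Real.norm_of_nonneg hb]
    _ ≤ a * (infDist z₁ C + ε) + b * (infDist z₂ C + ε) := by gcongr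
    _ = a • infDist z₁ C + b • infDist z₂ C + ε := by
        rw [smul_eq_mul, smul_eq_mul]; linear_combination ε * hab

theorem Convex.mul_infDist_le_infDist_homothety_s7 {C : Set Z} (hC : Convex ℝ C) {c₀ : Z}
    (hc₀ : c₀ ∈ C) {s : ℝ} (hs : 1 ≤ s) (w : Z) :
    s * infDist w C ≤ infDist (AffineMap.homothety c₀ s w) C := by
  have hs₀ : 0 < s := one_pos.trans_le hs
  refine (le_infDist ⟨c₀, hc₀⟩).2 fun c hc => ?_
  set c' := AffineMap.homothety c₀ s⁻¹ c with hc'_def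
  have hc' : c' ∈ C := by
    rw [hc'_def, AffineMap.homothety_eq_lineMap]
    exact hC.lineMap_mem hc₀ hc ⟨inv_nonneg.2 hs₀.le, inv_le_one_of_one_le₀ hs⟩
  have hback : AffineMap.homothety c₀ s c' = c := by
    rw [hc'_def, ← AffineMap.homothety_mul_apply, mul_inv_cancel₀ hs₀.ne', AffineMap.homothety_one,
      AffineMap.id_apply]
  calc s * infDist w C ≤ s * dist w c' :=
        mul_le_mul_of_nonneg_left (infDist_le_dist_of_mem hc') hs₀.le
    _ = dist (AffineMap.homothety c₀ s w) (AffineMap.homothety c₀ s c') := by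
        simp only [AffineMap.homothety_apply, vsub_eq_sub, vadd_eq_add, dist_eq_norm]
        rw [show s • (w - c₀) + c₀ - (s • (c' - c₀) + c₀) = s • (w - c') by module, norm_smul,
          Real.norm_of_nonneg hs₀.le]
    _ = dist (AffineMap.homothety c₀ s w) c := by rw [hback]

theorem ConvexCone.infDist_add_le (C : ConvexCone ℝ Z) (a : Z) {c : Z} (hc : c ∈ C) :
    infDist (a + c) C ≤ infDist a C :=
  (le_infDist ⟨c, hc⟩).2 fun c' hc' =>
    (infDist_le_dist_of_mem (C.add_mem hc' hc)).trans_eq (dist_add_right a c' c)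

theorem ConvexCone.infDist_le_of_mem_enlarge_add (C : ConvexCone ℝ Z) (hC : (C : Set Z).Nonempty)
    {B : Set Z} (hB : B.Nonempty) {m r : ℝ} (hBm : ∀ b ∈ B, infDist b C ≤ m) {p : Z}
    (hp : p ∈ enlarge (B + (C : Set Z)) r) : infDist p C ≤ r + m := by
  have : infDist p C - m ≤ infDist p (B + (C : Set Z)) := by
    refine (le_infDist (hB.add hC)).2 ?_
    rintro _ ⟨b, hb, c, hc, rfl⟩
    have := infDist_le_infDist_add_dist (x := p) (y := b + c) (s := (C : Set Z))
    linarith [(C.infDist_add_le b hc).trans (hBm b hb), dist_comm p (b + c)]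
  linarith [show infDist p (B + (C : Set Z)) ≤ r from hp]

theorem ConvexCone.subset_of_enlarge_subset_enlarge_add (C : ConvexCone ℝ Z)
    (hCcl : IsClosed (C : Set Z)) (hC : (C : Set Z).Nonempty) {A B : Set Z} (hB : B.Nonempty)
    {m r s : ℝ} (hBm : ∀ b ∈ B, infDist b C ≤ m) (hs : 0 ≤ s) (hrs : r + m ≤ s)
    (hsub : enlarge A s ⊆ enlarge (B + (C : Set Z)) r) : A ⊆ C := by
  intro w hw
  by_contra hwC
  have hd : 0 < infDist w C := (hCcl.notMem_iff_infDist_pos hC).1 hwC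
  set d := infDist w C
  -- the homothety from `c₀` moving `w` by exactly `s` multiplies its distance to `C` by
  -- `1 + s / ‖w - c₀‖`, and lands where the distance to `C` is at most `r + m ≤ s`
  have key : ∀ c₀ ∈ (C : Set Z), d * (s + dist w c₀) ≤ s * dist w c₀ := by
    intro c₀ hc₀
    have hρ : 0 < dist w c₀ := hd.trans_le (infDist_le_dist_of_mem hc₀)
    set p := AffineMap.homothety c₀ (1 + s / dist w c₀) w
    have hpush : (1 + s / dist w c₀) * d ≤ infDist p C :=
      C.convex.mul_infDist_le_infDist_homothety_s7 hc₀ (le_add_of_nonneg_right (by positivity)) w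
    have hpA : p ∈ enlarge A s := by
      refine (infDist_le_dist_of_mem hw).trans_eq ?_
      rw [dist_homothety_self, dist_comm c₀, sub_add_cancel_left, norm_neg, Real.norm_of_nonneg
        (by positivity), div_mul_cancel₀ _ hρ.ne']
    have := C.infDist_le_of_mem_enlarge_add hC hB hBm (hsub hpA)
    calc d * (s + dist w c₀) = (1 + s / dist w c₀) * d * dist w c₀ := by
          field_simp
          ring
      _ ≤ s * dist w c₀ := mul_le_mul_of_nonneg_right (by linarith) hρ.le
  obtain ⟨c₀, hc₀⟩ := hC
  have hds : d < s := by
    nlinarith [key c₀ hc₀, infDist_le_dist_of_mem (x := w) hc₀]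
  have : d * s / (s - d) ≤ d := (le_infDist ⟨c₀, hc₀⟩).2 fun c hc => by
    rw [div_le_iff₀ (sub_pos.2 hds)]
    linarith [key c hc]
  rw [div_le_iff₀ (sub_pos.2 hds)] at this
  nlinarith

end InfDist

section Merit

variable {X Z : Type*} [NormedAddCommGroup Z] {G : X → Set Z} {C : Set Z} {x : X}

theorem infDist_le_toReal_merit (hfin : merit G C x ≠ ⊤) {z : Z} (hz : z ∈ G x) :
    infDist z C ≤ (merit G C x).toReal :=
  (ENNReal.ofReal_le_iff_le_toReal hfin).1 (le_iSup₂_of_le z hz le_rfl)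

theorem toReal_merit_le {M : ℝ} (hM : 0 ≤ M) (h : ∀ z ∈ G x, infDist z C ≤ M) :
    (merit G C x).toReal ≤ M :=
  ENNReal.toReal_le_of_le_ofReal hM (iSup₂_le fun z hz => ENNReal.ofReal_le_ofReal (h z hz))

theorem toReal_merit_eq_zero (h : G x ⊆ C) : (merit G C x).toReal = 0 :=
  le_antisymm (toReal_merit_le le_rfl fun _ hz => (infDist_zero_of_mem (h hz)).le)
    ENNReal.toReal_nonneg

theorem merit_ne_top_of_isBounded (hC0 : (0 : Z) ∈ C) (hb : Bornology.IsBounded (G x \ C)) :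
    merit G C x ≠ ⊤ := by
  obtain ⟨M, hM⟩ := hb.subset_closedBall 0
  refine ne_top_of_le_ne_top ENNReal.ofReal_ne_top
    (iSup₂_le fun z hz => ENNReal.ofReal_le_ofReal (show infDist z C ≤ max M 0 from ?_))
  by_cases hzC : z ∈ C
  · rw [infDist_zero_of_mem hzC]
    exact le_max_right _ _
  · exact (infDist_le_dist_of_mem hC0).trans ((hM ⟨hz, hzC⟩).trans (le_max_left _ _))

variable [NormedAddCommGroup X]

theorem tendsto_toReal_merit {xb : X} (hxb : G xb ⊆ C) (hne : (G xb).Nonempty)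
    (husc : ∀ ε > 0, ∃ δ > 0, ∀ x ∈ closedBall xb δ, ∀ z ∈ G x, infDist z (G xb) ≤ ε) :
    Tendsto (fun x => (merit G C x).toReal) (𝓝 xb) (𝓝 0) := by
  refine Metric.tendsto_nhds.2 fun ε hε => ?_
  obtain ⟨δ, hδ, h⟩ := husc (ε / 2) (half_pos hε)
  filter_upwards [closedBall_mem_nhds xb hδ] with x hx
  have : (merit G C x).toReal ≤ ε / 2 := toReal_merit_le (half_pos hε).le fun z hz =>
    (infDist_le_infDist_of_subset hxb hne).trans (h x hx z hz)
  rw [Real.dist_0_eq_abs, abs_of_nonneg ENNReal.toReal_nonneg]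
  linarith

variable [NormedSpace ℝ X] [NormedSpace ℝ Z]

theorem convexOn_toReal_merit (C : ConvexCone ℝ Z) (hC : (C : Set Z).Nonempty)
    (hconc : ∀ x₁ x₂ : X, ∀ t ∈ Icc (0 : ℝ) 1,
      G (t • x₁ + (1 - t) • x₂) ⊆ t • G x₁ + (1 - t) • G x₂ + C)
    {s : Set X} (hs : Convex ℝ s) (hfin : ∀ x ∈ s, merit G C x ≠ ⊤) :
    ConvexOn ℝ s (fun x => (merit G C x).toReal) := by
  refine ⟨hs, fun x₁ hx₁ x₂ hx₂ a b ha hb hab => toReal_merit_le (by positivity) fun w hw => ?_⟩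
  obtain rfl : b = 1 - a := eq_sub_of_add_eq' hab
  obtain ⟨_, ⟨_, ⟨z₁, hz₁, rfl⟩, _, ⟨z₂, hz₂, rfl⟩, rfl⟩, c, hc, rfl⟩ :=
    hconc x₁ x₂ a ⟨ha, by linarith⟩ hw
  calc infDist (a • z₁ + (1 - a) • z₂ + c) C ≤ infDist (a • z₁ + (1 - a) • z₂) C :=
        C.infDist_add_le _ hc
    _ ≤ a • infDist z₁ C + (1 - a) • infDist z₂ C :=
        (C.convex.convexOn_infDist hC).2 trivial trivial ha hb hab
    _ ≤ a • (merit G C x₁).toReal + (1 - a) • (merit G C x₂).toReal := by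
        gcongr
        exacts [infDist_le_toReal_merit (hfin x₁ hx₁) hz₁,
          infDist_le_toReal_merit (hfin x₂ hx₂) hz₂]

end Merit

section MetricIncrease

variable {X Z : Type*} [NormedAddCommGroup X] [NormedAddCommGroup Z] {G : X → Set Z} {S : Set X}
  {C : Set Z} {xb : X} {α δ : ℝ}

theorem MetIncrWith.mono {α' : ℝ} (h : MetIncrWith G S C xb α' δ) (hα : α ≤ α') :
    MetIncrWith G S C xb α δ := fun x hx r hr => by
  obtain ⟨z, hz, hsub⟩ := h x hx r hr
  exact ⟨z, hz, fun p hp => hsub (le_trans (α := ℝ) hp (mul_le_mul_of_nonneg_right hα hr.1.le))⟩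

theorem exists_metIncrWith_of_lt_incrBound (h : ENNReal.ofReal α < incrBound G S C xb) :
    ∃ δ > 0, MetIncrWith G S C xb α δ := by
  obtain ⟨_, ⟨α', rfl, -, δ, hδ, hMI⟩, hlt⟩ := lt_sSup_iff.1 h
  exact ⟨δ, hδ, hMI.mono (ENNReal.ofReal_lt_ofReal_iff'.1 hlt).1.le⟩

variable [NormedSpace ℝ Z]

theorem MetIncrWith.exists_dist_le_toReal_merit (C : ConvexCone ℝ Z) (hCcl : IsClosed (C : Set Z))
    (hC : (C : Set Z).Nonempty) (hG : ∀ x, (G x).Nonempty) (hMI : MetIncrWith G S C xb α δ)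
    (hα : 1 < α) {x : X} (hx : x ∈ closedBall xb δ ∩ S) (hfin : merit G C x ≠ ⊤)
    (hsmall : (merit G C x).toReal < (α - 1) * δ) :
    ∃ z ∈ S ∩ {z | G z ⊆ C}, dist x z ≤ (α - 1)⁻¹ * (merit G C x).toReal := by
  have hα₁ : 0 < α - 1 := sub_pos.2 hα
  rcases (ENNReal.toReal_nonneg (a := merit G C x)).eq_or_lt with hm | hm
  · refine ⟨x, ⟨hx.2, fun w hw => ?_⟩, by simp [← hm]⟩
    exact (hCcl.mem_iff_infDist_zero hC).2
      (le_antisymm ((infDist_le_toReal_merit hfin hw).trans hm.ge) infDist_nonneg)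
  · set m := (merit G C x).toReal
    set r := (α - 1)⁻¹ * m
    have hrm : (α - 1) * r = m := by simp only [r]; field_simp
    have hr : r ∈ Ioo 0 δ := ⟨by positivity, by nlinarith⟩
    obtain ⟨z, ⟨hzx, hzS⟩, hsub⟩ := hMI x hx r hr
    refine ⟨z, ⟨hzS, C.subset_of_enlarge_subset_enlarge_add hCcl hC (hG x)
      (fun w hw => infDist_le_toReal_merit hfin hw) (by positivity) (by linarith) hsub⟩, ?_⟩
    rwa [dist_comm]

theorem MetIncrWith.eventually_exists_dist_le_toReal_merit (C : ConvexCone ℝ Z)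
    (hCcl : IsClosed (C : Set Z)) (hC : (C : Set Z).Nonempty) (hG : ∀ x, (G x).Nonempty)
    (hMI : MetIncrWith G S C xb α δ) (hα : 1 < α) (hδ : 0 < δ)
    (hfin : ∀ᶠ x in 𝓝 xb, merit G C x ≠ ⊤)
    (hm : Tendsto (fun x => (merit G C x).toReal) (𝓝 xb) (𝓝 0)) :
    ∀ᶠ x in 𝓝 xb, x ∈ S →
      ∃ z ∈ S ∩ {z | G z ⊆ C}, dist x z ≤ (α - 1)⁻¹ * (merit G C x).toReal := by
  filter_upwards [hfin, closedBall_mem_nhds xb hδ,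
    hm.eventually (gt_mem_nhds (mul_pos (sub_pos.2 hα) hδ))] with x hxfin hxb hxm hxS
  exact hMI.exists_dist_le_toReal_merit C hCcl hC hG hα ⟨hxb, hxS⟩ hxfin hxm

end MetricIncrease

section Penalty

variable {X Y : Type*} [NormedAddCommGroup X] [NormedAddCommGroup Y] [NormedSpace ℝ Y]
  {S : Set X} {xb : X} {f : X → Y} (K : ConvexCone ℝ Y)

theorem LocWeakEffOn.add_penalty {R : Set X} (hweff : LocWeakEffOn f R K xb) {ℓf : ℝ} {e : Y}
    (hℓf : 0 ≤ ℓf) (hLip : KLipschitzNearWith f K xb ℓf e) (he : e ∈ K) {ψ : X → ℝ}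
    (hψ0 : ψ xb = 0) (hψ : Tendsto ψ (𝓝 xb) (𝓝 0)) (hψnn : ∀ x, 0 ≤ ψ x) {κ c : ℝ}
    (hc : ℓf * κ ≤ c) (herr : ∀ᶠ x in 𝓝 xb, x ∈ S → ∃ z ∈ R, dist x z ≤ κ * ψ x) :
    LocWeakEffOn (fun x => f x + (c * ψ x) • e) S K xb := by
  obtain ⟨δ₁, hδ₁, hweff⟩ := hweff
  obtain ⟨δ₂, hδ₂, hLip⟩ := hLip
  set δ := min δ₁ δ₂
  have hδ : 0 < δ := lt_min hδ₁ hδ₂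
  have hnear : ∀ᶠ x in 𝓝 xb, x ∈ closedBall xb (δ / 2) ∧ κ * ψ x < δ / 2 :=
    (eventually_mem_set.2 (closedBall_mem_nhds xb (half_pos hδ))).and
      ((by simpa using hψ.const_mul κ : Tendsto (κ * ψ ·) (𝓝 xb) (𝓝 0)).eventually
        (gt_mem_nhds (half_pos hδ)))
  obtain ⟨ρ, hρ, hρ'⟩ := nhds_basis_closedBall.eventually_iff.1 (herr.and hnear)
  refine ⟨ρ, hρ, fun x ⟨hxS, hxρ⟩ hint => ?_⟩
  obtain ⟨herrx, hxδ, hψx⟩ := hρ' hxρ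
  obtain ⟨z, hzR, hxz⟩ := herrx hxS
  have hzδ : z ∈ closedBall xb δ := by
    rw [mem_closedBall] at hxδ ⊢
    linarith [dist_triangle z x xb, dist_comm x z]
  have hxδ' : x ∈ closedBall xb δ := closedBall_subset_closedBall (half_le_self hδ.le) hxδ
  have hlip := hLip x (closedBall_subset_closedBall (min_le_right _ _) hxδ') z
    (closedBall_subset_closedBall (min_le_right _ _) hzδ)
  have hgap : 0 ≤ c * ψ x - ℓf * ‖x - z‖ := by
    rw [← dist_eq_norm]
    nlinarith [mul_nonneg (sub_nonneg.2 hc) (hψnn x), mul_nonneg hℓf (sub_nonneg.2 hxz)]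
  refine hweff z ⟨hzR, closedBall_subset_closedBall (min_le_left _ _) hzδ⟩ ?_
  convert K.add_mem_interior (K.add_smul_mem_interior hint he hgap) hlip using 1
  simp only [hψ0, mul_zero, zero_smul, add_zero]
  module

end Penalty

section DirDeriv

variable {X Y : Type*} [NormedAddCommGroup X] [NormedSpace ℝ X] [NormedAddCommGroup Y]
  [NormedSpace ℝ Y] {S : Set X} {xb v : X}

theorem tendsto_add_smul_nhdsGT (xb v : X) :
    Tendsto (fun t : ℝ => xb + t • v) (𝓝[>] 0) (𝓝 xb) :=
  ((by fun_prop : Continuous fun t : ℝ => xb + t • v).tendsto' 0 xb (by simp)).mono_left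
    nhdsWithin_le_nhds

theorem mem_feasDirCone_iff : v ∈ feasDirCone S xb ↔ ∀ᶠ t in 𝓝[>] (0 : ℝ), xb + t • v ∈ S :=
  ⟨fun ⟨_, hδ, h⟩ => mem_of_superset (Ioo_mem_nhdsGT hδ) h, fun h =>
    let ⟨δ, hδ, h⟩ := mem_nhdsGT_iff_exists_Ioo_subset.1 h; ⟨δ, hδ, h⟩⟩

theorem zero_mem_feasDirCone (h : xb ∈ S) : 0 ∈ feasDirCone S xb :=
  mem_feasDirCone_iff.2 (.of_forall fun _ => by simpa using h)

theorem convex_feasDirCone (hS : ∃ r > 0, Convex ℝ (S ∩ closedBall xb r)) :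
    Convex ℝ (feasDirCone S xb) := by
  obtain ⟨r, hr, hconv⟩ := hS
  intro v₁ h₁ v₂ h₂ a b ha hb hab
  rw [mem_feasDirCone_iff] at h₁ h₂ ⊢
  have hball := fun v => (tendsto_add_smul_nhdsGT xb v).eventually (closedBall_mem_nhds xb hr)
  filter_upwards [h₁, h₂, hball v₁, hball v₂] with t ht₁ ht₂ hb₁ hb₂
  obtain rfl := eq_sub_of_add_eq' hab
  convert (hconv ⟨ht₁, hb₁⟩ ⟨ht₂, hb₂⟩ ha hb hab).1 using 1
  module

variable {f : X → Y} {d d' : Y}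

theorem HasDirDerivAt.unique (h : HasDirDerivAt f xb v d) (h' : HasDirDerivAt f xb v d') :
    d = d' :=
  tendsto_nhds_unique h h'

theorem hasDirDerivAt_zero (f : X → Y) (xb : X) : HasDirDerivAt f xb 0 0 := by
  simp [HasDirDerivAt]

theorem HasDirDerivAt.add_smul_const {ψ : X → ℝ} {d₂ : ℝ} (hf : HasDirDerivAt f xb v d)
    (hψ : HasDirDerivAt ψ xb v d₂) (c : ℝ) (e : Y) :
    HasDirDerivAt (fun x => f x + (c * ψ x) • e) xb v (d + (c * d₂) • e) := by
  refine (hf.add ((hψ.const_mul c).smul_const e)).congr fun t => ?_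
  simp only [smul_eq_mul]
  module

theorem ConvexOn.exists_hasDirDerivAt {φ : X → ℝ} {U : Set X} (hφ : ConvexOn ℝ U φ)
    (hU : U ∈ 𝓝 xb) (v : X) : ∃ d, HasDirDerivAt φ xb v d := by
  have hline : ConvexOn ℝ ((fun t : ℝ => xb + t • v) ⁻¹' U) (fun t => φ (xb + t • v)) :=
    (hφ.translate_right xb).comp_linearMap (LinearMap.toSpanSingleton ℝ X v)
  have h0 : (0 : ℝ) ∈ interior ((fun t : ℝ => xb + t • v) ⁻¹' U) :=
    mem_interior_iff_mem_nhds.2 ((by fun_prop : Continuous fun t : ℝ => xb + t • v)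
      |>.continuousAt.preimage_mem_nhds (by simpa using hU))
  refine ⟨derivWithin (fun t => φ (xb + t • v)) (Ioi (0 : ℝ)) 0, ?_⟩
  simpa [HasDirDerivAt, slope_fun_def] using
    hasDerivWithinAt_iff_tendsto_slope.1 (hline.hasDerivWithinAt_rightDeriv_of_mem_interior h0)

theorem ConvexOn.convexOn_of_hasDirDerivAt {φ : X → ℝ} {U : Set X} (hφ : ConvexOn ℝ U φ)
    (hU : U ∈ 𝓝 xb) {φ' : X → ℝ} (hφ' : ∀ v, HasDirDerivAt φ xb v (φ' v)) :
    ConvexOn ℝ univ φ' := by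
  refine ⟨convex_univ, fun v₁ _ v₂ _ a b ha hb hab => ?_⟩
  refine le_of_tendsto_of_tendsto (hφ' _) (((hφ' v₁).const_smul a).add ((hφ' v₂).const_smul b)) ?_
  have hnear := fun v => (tendsto_add_smul_nhdsGT xb v).eventually hU
  filter_upwards [hnear v₁, hnear v₂, self_mem_nhdsWithin] with t h₁ h₂ (ht : 0 < t)
  obtain rfl := eq_sub_of_add_eq' hab
  have hcomb : xb + t • (a • v₁ + (1 - a) • v₂) = a • (xb + t • v₁) + (1 - a) • (xb + t • v₂) := by
    module
  have := hφ.2 h₁ h₂ ha hb hab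
  rw [← hcomb, smul_eq_mul, smul_eq_mul] at this
  simp only [smul_eq_mul]
  calc t⁻¹ * (φ (xb + t • (a • v₁ + (1 - a) • v₂)) - φ xb)
      ≤ t⁻¹ * (a * (φ (xb + t • v₁) - φ xb) + (1 - a) * (φ (xb + t • v₂) - φ xb)) := by
        gcongr
        linarith
    _ = _ := by ring

theorem LocWeakEffOn.neg_notMem_interior_s7 (K : ConvexCone ℝ Y) {Φ : X → Y}
    (h : LocWeakEffOn Φ S K xb) (hv : v ∈ feasDirCone S xb) (hd : HasDirDerivAt Φ xb v d) :
    -d ∉ interior (K : Set Y) := by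
  obtain ⟨δ, hδ, h⟩ := h
  have : ∀ᶠ t in 𝓝[>] (0 : ℝ), -(t⁻¹ • (Φ (xb + t • v) - Φ xb)) ∈ (interior (K : Set Y))ᶜ := by
    filter_upwards [mem_feasDirCone_iff.1 hv,
      (tendsto_add_smul_nhdsGT xb v).eventually (closedBall_mem_nhds xb hδ), self_mem_nhdsWithin]
      with t hS hball (ht : 0 < t) hmem
    refine h _ ⟨hS, hball⟩ ?_
    simpa [smul_smul, ht.ne'] using K.smul_mem_interior ht hmem
  exact isOpen_interior.isClosed_compl.mem_of_tendsto hd.neg this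

end DirDeriv

section Separation

variable {X Y : Type*} [AddCommGroup X] [Module ℝ X] [NormedAddCommGroup Y] [NormedSpace ℝ Y]
  (K : ConvexCone ℝ Y) {F : X → Y}

theorem convex_setOf_sub_mem_interior (hF : Convex ℝ {p : X × Y | p.2 - F p.1 ∈ K}) :
    Convex ℝ {p : X × Y | p.2 - F p.1 ∈ interior (K : Set Y)} := by
  rintro ⟨v₁, y₁⟩ (h₁ : y₁ - F v₁ ∈ interior (K : Set Y)) ⟨v₂, y₂⟩
    (h₂ : y₂ - F v₂ ∈ interior (K : Set Y)) a b ha hb hab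
  -- `K` need not contain `0`: half of the interior slack is spent to land in the `K`-epigraph,
  -- the other half keeps the result interior
  have hhalf : ∀ {v : X} {y : Y}, y - F v ∈ interior (K : Set Y) →
      (v, y - (1 / 2 : ℝ) • (y - F v)) ∈ {p : X × Y | p.2 - F p.1 ∈ K} := fun {v y} h => by
    show y - (1 / 2 : ℝ) • (y - F v) - F v ∈ K
    convert K.smul_mem one_half_pos (interior_subset h) using 1
    module
  have hK := hF (hhalf h₁) (hhalf h₂) ha hb hab
  have hint := K.smul_mem_interior one_half_pos (K.convex.interior h₁ h₂ ha hb hab)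
  show a • y₁ + b • y₂ - F (a • v₁ + b • v₂) ∈ interior (K : Set Y)
  convert K.add_mem_interior hint hK using 1
  simp only [Prod.smul_mk, Prod.mk_add_mk]
  module

theorem convex_setOf_sub_add_smul_mem (hF : Convex ℝ {p : X × Y | p.2 - F p.1 ∈ K})
    {ψ : X → ℝ} (hψ : ConvexOn ℝ univ ψ) {e : Y} (he : e ∈ K) :
    Convex ℝ {p : X × Y | p.2 - (F p.1 + ψ p.1 • e) ∈ K} := by
  rintro ⟨v₁, y₁⟩ (h₁ : y₁ - (F v₁ + ψ v₁ • e) ∈ K) ⟨v₂, y₂⟩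
    (h₂ : y₂ - (F v₂ + ψ v₂ • e) ∈ K) a b ha hb hab
  have hK := hF (x := (v₁, y₁ - ψ v₁ • e)) (y := (v₂, y₂ - ψ v₂ • e))
    (show y₁ - ψ v₁ • e - F v₁ ∈ K by rwa [sub_sub, add_comm])
    (show y₂ - ψ v₂ • e - F v₂ ∈ K by rwa [sub_sub, add_comm]) ha hb hab
  have hgap : 0 ≤ a • ψ v₁ + b • ψ v₂ - ψ (a • v₁ + b • v₂) :=
    sub_nonneg.2 (hψ.2 trivial trivial ha hb hab)
  show a • y₁ + b • y₂ - (F (a • v₁ + b • v₂) + ψ (a • v₁ + b • v₂) • e) ∈ K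
  convert K.add_smul_mem hK he hgap using 1
  simp only [Prod.smul_mk, Prod.mk_add_mk, smul_eq_mul]
  module

theorem exists_dual_nonneg_of_forall_neg_notMem_interior (hK : (interior (K : Set Y)).Nonempty)
    {I : Set X} (hI : Convex ℝ I) (hI0 : 0 ∈ I) (hF0 : F 0 = 0)
    (hF : Convex ℝ {p : X × Y | p.2 - F p.1 ∈ interior (K : Set Y)})
    (hFI : ∀ v ∈ I, -F v ∉ interior (K : Set Y)) :
    ∃ q : Y →L[ℝ] ℝ, q ≠ 0 ∧ (∀ y ∈ K, 0 ≤ q y) ∧ ∀ v ∈ I, 0 ≤ q (F v) := by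
  set A := {y | ∃ v ∈ I, y - F v ∈ interior (K : Set Y)}
  have hAconv : Convex ℝ A := by
    rintro y₁ ⟨v₁, hv₁, h₁⟩ y₂ ⟨v₂, hv₂, h₂⟩ a b ha hb hab
    exact ⟨a • v₁ + b • v₂, hI hv₁ hv₂ ha hb hab,
      hF (x := (v₁, y₁)) (y := (v₂, y₂)) h₁ h₂ ha hb hab⟩
  have hAopen : IsOpen A := isOpen_iff_mem_nhds.2 fun y ⟨v, hv, hy⟩ =>
    mem_of_superset ((continuous_sub_right (F v)).continuousAt.preimage_mem_nhds
      (isOpen_interior.mem_nhds hy)) fun _ hy' => ⟨v, hv, hy'⟩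
  have h0A : (0 : Y) ∉ A := fun ⟨v, hv, h⟩ => hFI v hv (by simpa using h)
  have hKA : interior (K : Set Y) ⊆ A := fun y hy => ⟨0, hI0, by simpa [hF0] using hy⟩
  obtain ⟨q, hq⟩ := geometric_hahn_banach_point_open hAconv hAopen h0A
  simp only [map_zero] at hq
  obtain ⟨k, hk⟩ := hK
  have hqk : 0 < q k := hq k (hKA hk)
  have hnonneg : ∀ y, (∀ t : ℝ, 0 < t → y + t • k ∈ A) → 0 ≤ q y := fun y hy =>
    le_of_forall_pos_lt_add fun ε hε => by
      simpa [div_mul_cancel₀ _ hqk.ne'] using hq _ (hy (ε / q k) (div_pos hε hqk))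
  refine ⟨q, fun h => by simp [h] at hqk, fun y hy => hnonneg y fun t ht => hKA ?_,
    fun v hv => hnonneg _ fun t ht => ⟨v, hv, by simpa using K.smul_mem_interior ht hk⟩⟩
  rw [add_comm]
  exact K.add_mem_interior (K.smul_mem_interior ht hk) hy

end Separation

theorem statement_7_general
    {X Y Z : Type*} [NormedAddCommGroup X] [NormedSpace ℝ X]
    [NormedAddCommGroup Y] [NormedSpace ℝ Y]
    [NormedAddCommGroup Z] [NormedSpace ℝ Z]
    (K : Set Y) (hKconv : Convex ℝ K)
    (hKcone : ∀ t : ℝ, 0 < t → ∀ y ∈ K, t • y ∈ K)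
    (S : Set X)
    (C : Set Z) (hCcl : IsClosed C) (hCconv : Convex ℝ C)
    (hCcone : ∀ t : ℝ, 0 < t → ∀ z ∈ C, t • z ∈ C) (hC0 : (0:Z) ∈ C)
    (f : X → Y) (G : X → Set Z) (hG : ∀ x, (G x).Nonempty)
    (xb : X) (hxbS : xb ∈ S) (hxbG : G xb ⊆ C)
    (hweff : LocWeakEffOn f (S ∩ {x | G x ⊆ C}) K xb)
    -- (i) S locally convex around xb
    (hSconv : ∃ r > 0, Convex ℝ (S ∩ Metric.closedBall xb r))
    -- (ii) f K-Lipschitz near xb, directionally differentiable with K-sublinear derivative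
    (ℓf : ℝ) (hℓf : 0 < ℓf) (e : Y) (he : e ∈ interior K)
    (hLip : KLipschitzNearWith f K xb ℓf e)
    (f' : X → Y) (hf' : ∀ v, HasDirDerivAt f xb v (f' v))
    (hepi : Convex ℝ {p : X × Y | p.2 - f' p.1 ∈ K})
    -- (iv) G C-bounded around xb and Hausdorff u.s.c. at xb
    (hCbd : ∃ δ > 0, ∀ x ∈ Metric.closedBall xb δ, Bornology.IsBounded (G x \ C))
    (husc : ∀ ε > 0, ∃ δ > 0, ∀ x ∈ Metric.closedBall xb δ, ∀ z ∈ G x,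
      Metric.infDist z (G xb) ≤ ε)
    -- (v) G C-concave on X
    (hconc : ∀ x₁ x₂ : X, ∀ t ∈ Set.Icc (0:ℝ) 1,
      G (t • x₁ + (1 - t) • x₂) ⊆ t • G x₁ + (1 - t) • G x₂ + C) :
    ∃ ν' : X → ℝ,
      (∀ v : X, (∀ᶠ t in nhdsWithin (0:ℝ) (Set.Ioi 0), merit G C (xb + t • v) ≠ ⊤) ∧
        Filter.Tendsto
          (fun t : ℝ => ((merit G C (xb + t • v)).toReal - (merit G C xb).toReal) / t)
          (nhdsWithin (0:ℝ) (Set.Ioi 0)) (nhds (ν' v))) ∧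
      ∀ α : ℝ, 1 < α → ENNReal.ofReal α < incrBound G S C xb →
      ∀ ℓ : ℝ, ℓf ≤ ℓ →
      ∃ q : Y →L[ℝ] ℝ, q ≠ 0 ∧ (∀ y ∈ K, 0 ≤ q y) ∧
        ∀ v ∈ feasDirCone S xb, 0 ≤ q (f' v) + ℓ / (α - 1) * ν' v * q e := by
  let K' := ConvexCone.ofConvex hKconv hKcone
  let C' := ConvexCone.ofConvex hCconv hCcone
  obtain ⟨δ, hδ, hbd⟩ := hCbd
  have hU : closedBall xb δ ∈ 𝓝 xb := closedBall_mem_nhds xb hδ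
  set ν := fun x => (merit G C x).toReal
  have hfin : ∀ x ∈ closedBall xb δ, merit G C x ≠ ⊤ :=
    fun x hx => merit_ne_top_of_isBounded hC0 (hbd x hx)
  have hνconv : ConvexOn ℝ (closedBall xb δ) ν :=
    convexOn_toReal_merit C' ⟨0, hC0⟩ hconc (convex_closedBall xb δ) hfin
  choose ν' hν' using hνconv.exists_hasDirDerivAt hU
  refine ⟨ν', fun v => ⟨(tendsto_add_smul_nhdsGT xb v).eventually (eventually_of_mem hU hfin),
    by simpa [HasDirDerivAt, ν, div_eq_inv_mul] using hν' v⟩, fun α hα hαinc ℓ hℓ => ?_⟩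
  obtain ⟨δα, hδα, hMI⟩ := exists_metIncrWith_of_lt_incrBound hαinc
  have hνlim := tendsto_toReal_merit hxbG (hG xb) husc
  have hpen : LocWeakEffOn (fun x => f x + (ℓ / (α - 1) * ν x) • e) S K xb :=
    hweff.add_penalty K' hℓf.le hLip (interior_subset he) (toReal_merit_eq_zero hxbG) hνlim
      (fun _ => ENNReal.toReal_nonneg)
      (by rw [div_eq_mul_inv]; exact mul_le_mul_of_nonneg_right hℓ (by simp [hα.le]))
      (hMI.eventually_exists_dist_le_toReal_merit C' hCcl ⟨0, hC0⟩ hG hα hδα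
        (eventually_of_mem hU hfin) hνlim)
  set F := fun v => f' v + (ℓ / (α - 1) * ν' v) • e
  have hF0 : F 0 = 0 := by
    simp [F, (hf' 0).unique (hasDirDerivAt_zero f xb), (hν' 0).unique (hasDirDerivAt_zero ν xb)]
  have hFconv : Convex ℝ {p : X × Y | p.2 - F p.1 ∈ interior K} :=
    convex_setOf_sub_mem_interior K' (convex_setOf_sub_add_smul_mem K' hepi
      ((hνconv.convexOn_of_hasDirDerivAt hU hν').smul
        (div_nonneg (hℓf.le.trans hℓ) (by linarith))) (interior_subset he))
  obtain ⟨q, hq, hqK, hqF⟩ := exists_dual_nonneg_of_forall_neg_notMem_interior K' ⟨e, he⟩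
    (convex_feasDirCone hSconv) (zero_mem_feasDirCone hxbS) hF0 hFconv
    fun v hv => hpen.neg_notMem_interior_s7 K' hv ((hf' v).add_smul_const (hν' v) _ e)
  exact ⟨q, hq, hqK, fun v hv => by simpa [F, mul_assoc] using hqF v hv⟩

/-- weak efficiency condition via penalization under convexity. -/
theorem statement_7
    {X Y Z : Type*} [NormedAddCommGroup X] [NormedSpace ℝ X] [CompleteSpace X]
    [NormedAddCommGroup Y] [NormedSpace ℝ Y] [CompleteSpace Y]
    [NormedAddCommGroup Z] [NormedSpace ℝ Z] [CompleteSpace Z]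
    (K : Set Y) (hKconv : Convex ℝ K)
    (hKcone : ∀ t : ℝ, 0 < t → ∀ y ∈ K, t • y ∈ K) (hKint : (interior K).Nonempty)
    (S : Set X) (hSne : S.Nonempty) (hScl : IsClosed S)
    (C : Set Z) (hCcl : IsClosed C) (hCconv : Convex ℝ C)
    (hCcone : ∀ t : ℝ, 0 < t → ∀ z ∈ C, t • z ∈ C) (hC0 : (0:Z) ∈ C)
    (hCne0 : C ≠ {0}) (hCneuniv : C ≠ Set.univ)
    (f : X → Y) (G : X → Set Z) (hG : ∀ x, (G x).Nonempty)
    (xb : X) (hxbS : xb ∈ S) (hxbG : G xb ⊆ C)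
    (hweff : LocWeakEffOn f (S ∩ {x | G x ⊆ C}) K xb)
    -- (i) S locally convex around xb
    (hSconv : ∃ r > 0, Convex ℝ (S ∩ Metric.closedBall xb r))
    -- (ii) f K-Lipschitz near xb, directionally differentiable with K-sublinear derivative
    (ℓf : ℝ) (hℓf : 0 < ℓf) (e : Y) (he : e ∈ interior K) (hnorme : ‖e‖ ≤ 1)
    (hLip : KLipschitzNearWith f K xb ℓf e)
    (f' : X → Y) (hf' : ∀ v, HasDirDerivAt f xb v (f' v))
    (hph : ∀ t : ℝ, 0 < t → ∀ v, f' (t • v) = t • f' v)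
    (hepi : Convex ℝ {p : X × Y | p.2 - f' p.1 ∈ K})
    -- (iii) G l.s.c. and metrically C-increasing
    (hlsc : LscAround G xb) (hmi : MetIncr G S C xb)
    -- (iv) G C-bounded around xb and Hausdorff u.s.c. at xb
    (hCbd : ∃ δ > 0, ∀ x ∈ Metric.closedBall xb δ, Bornology.IsBounded (G x \ C))
    (husc : ∀ ε > 0, ∃ δ > 0, ∀ x ∈ Metric.closedBall xb δ, ∀ z ∈ G x,
      Metric.infDist z (G xb) ≤ ε)
    -- (v) G C-concave on X
    (hconc : ∀ x₁ x₂ : X, ∀ t ∈ Set.Icc (0:ℝ) 1,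
      G (t • x₁ + (1 - t) • x₂) ⊆ t • G x₁ + (1 - t) • G x₂ + C) :
    ∃ ν' : X → ℝ,
      (∀ v : X, (∀ᶠ t in nhdsWithin (0:ℝ) (Set.Ioi 0), merit G C (xb + t • v) ≠ ⊤) ∧
        Filter.Tendsto
          (fun t : ℝ => ((merit G C (xb + t • v)).toReal - (merit G C xb).toReal) / t)
          (nhdsWithin (0:ℝ) (Set.Ioi 0)) (nhds (ν' v))) ∧
      ∀ α : ℝ, 1 < α → ENNReal.ofReal α < incrBound G S C xb →
      ∀ ℓ : ℝ, ℓf ≤ ℓ →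
      ∃ q : Y →L[ℝ] ℝ, q ≠ 0 ∧ (∀ y ∈ K, 0 ≤ q y) ∧
        ∀ v ∈ feasDirCone S xb, 0 ≤ q (f' v) + ℓ / (α - 1) * ν' v * q e :=
  statement_7_general K hKconv hKcone S C hCcl hCconv hCcone hC0 f G hG xb hxbS hxbG hweff hSconv ℓf
    hℓf e he hLip f' hf' hepi hCbd husc hconc
end

section
/- Let X, Z be real Banach spaces, S ⊆ X a nonempty closed set, C ⊆ Z a proper closed convex cone with C ≠ {0}, and G : X ⇉ Z with G(x) ≠ ∅ for all x. Let R = S ∩ {x : G(x) ⊆ C} and x̄ ∈ R. Suppose that (i) G is lower semicontinuous at every point of some ball around x̄; (ii) G is metrically C-increasing around x̄ relative to S; (iii) G admits a positively homogeneous set-valued mapping H : X ⇉ Z as an outer prederivative at x̄. Then H⁺¹(C) ∩ WI(S,x̄) ⊆ T(R,x̄), where H⁺¹(C) = {v : H(v) ⊆ C}, WI(S,x̄) is the weak feasible direction cone to S at x̄, and T(R,x̄) is the contingent cone to R at x̄. -/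
open Filter Topology Metric Set Pointwise
open scoped ENNReal NNReal

/-!
For `v ∈ H⁺¹(C) ∩ WI(S, x̄)` take small `t > 0` with `x̄ + t v ∈ S`. Since `G(x̄) ⊆ C`,
`H(t v) = t H(v) ⊆ C` and `C + C ⊆ C`, the outer prederivative puts `G(x̄ + t v)` within `o(t)` of
`C`. Metric `C`-increase at a scale `r = o(t)` with `(α - 1) r` larger than this violation yields
`z ∈ S` with `‖z - (x̄ + t v)‖ ≤ r` and `G(z) ⊆ C`; convexity of `C` is what turns the inclusion
of enlargements into the exact inclusion. So `x̄ + t v + o(t) ∈ R` along `t → 0`, i.e.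
`v ∈ T(R, x̄)`.
-/

lemma add_subset_self_of_convex_of_smul_mem {Z : Type*} [AddCommGroup Z] [Module ℝ Z]
    {C : Set Z} (hconv : Convex ℝ C) (hcone : ∀ t : ℝ, 0 < t → ∀ z ∈ C, t • z ∈ C) :
    C + C ⊆ C := by
  rintro _ ⟨c, hc, c', hc', rfl⟩
  have hmid : (2⁻¹ : ℝ) • c + (2⁻¹ : ℝ) • c' ∈ C :=
    hconv hc hc' (by norm_num) (by norm_num) (by norm_num)
  simpa [← smul_add, smul_smul] using hcone 2 two_pos _ hmid

lemma infDist_add_le_infDist {Z : Type*} [SeminormedAddCommGroup Z] {C : Set Z}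
    (hadd : C + C ⊆ C) {c : Z} (hc : c ∈ C) (a : Z) :
    infDist (c + a) C ≤ infDist a C := by
  rcases C.eq_empty_or_nonempty with rfl | hne
  · simp
  calc infDist (c + a) C ≤ infDist (c + a) ((c + ·) '' C) :=
        infDist_le_infDist_of_subset
          (by rintro _ ⟨c', hc', rfl⟩; exact hadd (add_mem_add hc hc')) (hne.image _)
    _ = infDist a C := infDist_image (isometry_vadd Z c)

lemma infDist_le_infDist_add_of_forall_infDist_le {Z : Type*} [SeminormedAddCommGroup Z] {A C : Set Z}
    (hadd : C + C ⊆ C) (hA : A.Nonempty) (hC : C.Nonempty) {M : ℝ}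
    (hAM : ∀ a ∈ A, infDist a C ≤ M) (p : Z) :
    infDist p C ≤ infDist p (A + C) + M := by
  rw [← sub_le_iff_le_add, le_infDist (hA.add hC)]
  rintro _ ⟨a, ha, c, hc, rfl⟩
  have hac : infDist (a + c) C ≤ M := by
    rw [add_comm]; exact (infDist_add_le_infDist hadd hc a).trans (hAM a ha)
  linarith [infDist_le_infDist_add_dist (s := C) (x := p) (y := a + c)]

/-- `w` lies on the segment from `c` to `w + s • (w - c)`, so convex combinations with `c`
shrink distances to that point by the factor `1 + s`. -/
lemma Convex.add_mul_infDist_le {X : Type*} [SeminormedAddCommGroup X] [NormedSpace ℝ X]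
    {C : Set X} (hconv : Convex ℝ C) {c : X} (hc : c ∈ C) (w : X) {s : ℝ} (hs : 0 ≤ s) :
    (1 + s) * infDist w C ≤ infDist (w + s • (w - c)) C := by
  rw [le_infDist ⟨c, hc⟩]
  intro c' hc'
  have hs1 : 0 < 1 + s := by linarith
  have hq : (1 + s)⁻¹ • c' + (s / (1 + s)) • c ∈ C :=
    hconv hc' hc (by positivity) (by positivity) (by field_simp)
  have hwq : w - ((1 + s)⁻¹ • c' + (s / (1 + s)) • c) = (1 + s)⁻¹ • (w + s • (w - c) - c') := by
    match_scalars <;> field_simp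
  have := infDist_le_dist_of_mem (x := w) hq
  rw [dist_eq_norm, hwq, norm_smul, Real.norm_of_nonneg (by positivity), ← dist_eq_norm] at this
  rwa [← le_div_iff₀' hs1, div_eq_inv_mul]

lemma subset_of_enlarge_subset_enlarge_add {Z : Type*} [NormedAddCommGroup Z] [NormedSpace ℝ Z]
    {A B C : Set Z} (hCcl : IsClosed C) (hconv : Convex ℝ C) (hadd : C + C ⊆ C)
    (hC : C.Nonempty) (hA : A.Nonempty) {M r ρ : ℝ} (hAM : ∀ a ∈ A, infDist a C ≤ M)
    (hr : 0 < r) (hρ : M + r < ρ) (h : enlarge B ρ ⊆ enlarge (A + C) r) : B ⊆ C := by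
  intro w hw
  by_contra hwC
  set d := infDist w C
  have hd : 0 < d := (hCcl.notMem_iff_infDist_pos hC).1 hwC
  have hK : 0 < M + r := by
    obtain ⟨a, ha⟩ := hA
    linarith [infDist_nonneg.trans (hAM a ha)]
  have hρ0 : 0 < ρ := hK.trans hρ
  -- Pushing `w` a distance `ρ` away from an almost nearest point of the convex set `C` moves it
  -- almost `ρ` further from `C`, whereas `h` keeps it within `M + r < ρ` of `C`.
  obtain ⟨c, hc, hwc⟩ := (infDist_lt_iff hC).1
    (show d < d * ρ / (M + r) by rw [lt_div_iff₀ hK]; nlinarith)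
  set t := dist w c
  have ht : 0 < t := hd.trans_le (infDist_le_dist_of_mem hc)
  set p := w + (ρ / t) • (w - c)
  have hpB : p ∈ enlarge B ρ := by
    refine (infDist_le_dist_of_mem hw).trans_eq ?_
    rw [dist_eq_norm, add_sub_cancel_left, norm_smul, Real.norm_of_nonneg (by positivity),
      ← dist_eq_norm]
    exact div_mul_cancel₀ ρ ht.ne'
  have hupper : infDist p C ≤ r + M := by
    linarith [infDist_le_infDist_add_of_forall_infDist_le hadd hA hC hAM p, show infDist p (A + C) ≤ r from h hpB]
  have hlower := hconv.add_mul_infDist_le hc w (s := ρ / t) (by positivity)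
  have hfar : M + r < ρ / t * d := by
    rw [div_mul_eq_mul_div, lt_div_iff₀ ht]
    rw [lt_div_iff₀ hK] at hwc
    linarith
  nlinarith

lemma MetIncrWith.exists_mem_near {X Z : Type*} [NormedAddCommGroup X] [NormedAddCommGroup Z]
    [NormedSpace ℝ Z] {G : X → Set Z} {S : Set X} {C : Set Z} {xb : X} {α δ : ℝ}
    (hmi : MetIncrWith G S C xb α δ) (hCcl : IsClosed C) (hconv : Convex ℝ C)
    (hadd : C + C ⊆ C) (hC : C.Nonempty) {x : X} (hx : x ∈ closedBall xb δ ∩ S)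
    (hGx : (G x).Nonempty) {M r : ℝ} (hM : ∀ u ∈ G x, infDist u C ≤ M) (hr : r ∈ Ioo 0 δ)
    (hMr : M < (α - 1) * r) : ∃ z ∈ S ∩ {x | G x ⊆ C}, dist z x ≤ r := by
  obtain ⟨z, ⟨hzx, hzS⟩, hincl⟩ := hmi x hx r hr
  exact ⟨z, ⟨hzS, subset_of_enlarge_subset_enlarge_add hCcl hconv hadd hC hGx hM hr.1
    (by linarith) hincl⟩, hzx⟩

lemma OuterPrederivAt.eventually_infDist_le {X Z : Type*} [NormedAddCommGroup X]
    [NormedSpace ℝ X] [NormedAddCommGroup Z] [NormedSpace ℝ Z] {G H : X → Set Z} {xb : X}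
    (hH : OuterPrederivAt G H xb) {C : Set Z} (hadd : C + C ⊆ C)
    (hcone : ∀ t : ℝ, 0 < t → ∀ z ∈ C, t • z ∈ C) (hxb : G xb ⊆ C) {v : X}
    (hv : v ∈ upperInv H C) {ε : ℝ} (hε : 0 < ε) :
    ∀ᶠ t in 𝓝[>] (0 : ℝ), ∀ u ∈ G (xb + t • v), infDist u C ≤ ε * t := by
  have hv1 : 0 < ‖v‖ + 1 := by positivity
  obtain ⟨δ, hδ, hGH⟩ := hH.2 (ε / (‖v‖ + 1)) (by positivity)
  filter_upwards [Ioo_mem_nhdsGT (show (0 : ℝ) < δ / (‖v‖ + 1) by positivity)]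
    with t ⟨ht, htδ⟩ u hu
  have htv : ‖t • v‖ ≤ t * (‖v‖ + 1) := by
    rw [norm_smul, Real.norm_of_nonneg ht.le]; nlinarith
  rw [lt_div_iff₀ hv1] at htδ
  have hmem := hGH (xb + t • v) (by
    rw [mem_closedBall, dist_eq_norm, add_sub_cancel_left]
    exact htv.trans htδ.le) hu
  rw [add_sub_cancel_left, hH.1 t ht v] at hmem
  obtain ⟨_, ⟨g, hg, _, ⟨h, hh, rfl⟩, rfl⟩, b, hb, rfl⟩ := hmem
  have hgh : g + t • h ∈ C := hadd (add_mem_add (hxb hg) (hcone t ht h (hv hh)))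
  calc infDist (g + t • h + b) C ≤ dist (g + t • h + b) (g + t • h) := infDist_le_dist_of_mem hgh
    _ = ‖b‖ := by rw [dist_eq_norm, add_sub_cancel_left]
    _ ≤ ε / (‖v‖ + 1) * ‖t • v‖ := by simpa using hb
    _ ≤ ε / (‖v‖ + 1) * (t * (‖v‖ + 1)) := by gcongr
    _ = ε * t := by field_simp

lemma frequently_mem_of_mem_weakFeasDirCone {X : Type*} [NormedAddCommGroup X]
    [NormedSpace ℝ X] {S : Set X} {xb v : X} (hv : v ∈ weakFeasDirCone S xb) :
    ∃ᶠ t in 𝓝[>] (0 : ℝ), xb + t • v ∈ S := by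
  rw [Filter.frequently_iff]
  intro U hU
  obtain ⟨ε, hε, hεU⟩ := mem_nhdsGT_iff_exists_Ioo_subset.1 hU
  obtain ⟨t, ht, htS⟩ := hv ε hε
  exact ⟨t, hεU ht, htS⟩

lemma mem_contingentCone_of_frequently {X : Type*} [NormedAddCommGroup X] [NormedSpace ℝ X]
    {A : Set X} {xb v : X}
    (h : ∀ ε > 0, ∃ᶠ t in 𝓝[>] (0 : ℝ), ∃ z ∈ A, ‖z - (xb + t • v)‖ ≤ ε * t) :
    v ∈ contingentCone A xb := by
  have hn : ∀ n : ℕ, ∃ t ∈ Ioo (0 : ℝ) (1 / (n + 1)), ∃ z ∈ A,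
      ‖z - (xb + t • v)‖ ≤ 1 / (n + 1) * t := fun n =>
    ((h _ Nat.one_div_pos_of_nat).and_eventually (Ioo_mem_nhdsGT Nat.one_div_pos_of_nat)).exists
      |>.imp fun _ ⟨hz, ht⟩ => ⟨ht, hz⟩
  choose t ht z hzA hz using hn
  refine ⟨fun n => (t n)⁻¹ • (z n - xb), t, ?_, ?_, fun n => (ht n).1, fun n => ?_⟩
  · rw [tendsto_iff_norm_sub_tendsto_zero]
    refine squeeze_zero (fun _ => norm_nonneg _) (fun n => ?_)
      tendsto_one_div_add_atTop_nhds_zero_nat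
    have htn := (ht n).1
    have hsub : (t n)⁻¹ • (z n - xb) - v = (t n)⁻¹ • (z n - (xb + t n • v)) := by
      simp only [smul_sub, smul_add, inv_smul_smul₀ htn.ne']
      abel
    rw [hsub, norm_smul, Real.norm_of_nonneg (inv_nonneg.2 htn.le), inv_mul_le_iff₀ htn,
      mul_comm]
    exact hz n
  · exact squeeze_zero (fun n => (ht n).1.le) (fun n => (ht n).2.le)
      tendsto_one_div_add_atTop_nhds_zero_nat
  · rw [smul_inv_smul₀ (ht n).1.ne', add_sub_cancel]
    exact hzA n

theorem statement_8_general
    {X Z : Type*} [NormedAddCommGroup X] [NormedSpace ℝ X]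
    [NormedAddCommGroup Z] [NormedSpace ℝ Z]
    (S : Set X)
    (C : Set Z) (hCcl : IsClosed C) (hCconv : Convex ℝ C)
    (hCcone : ∀ t : ℝ, 0 < t → ∀ z ∈ C, t • z ∈ C) (hC0 : (0:Z) ∈ C)
    (G : X → Set Z) (hG : ∀ x, (G x).Nonempty)
    (xb : X) (hxbG : G xb ⊆ C)
    (hmi : MetIncr G S C xb)
    (H : X → Set Z) (hH : OuterPrederivAt G H xb) :
    upperInv H C ∩ weakFeasDirCone S xb ⊆ contingentCone (S ∩ {x | G x ⊆ C}) xb := by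
  rintro v ⟨hvH, hvS⟩
  obtain ⟨α, hα, δ, hδ, hmiδ⟩ := hmi
  have hadd := add_subset_self_of_convex_of_smul_mem hCconv hCcone
  refine mem_contingentCone_of_frequently fun ε hε => ?_
  have hnear : ∀ᶠ t in 𝓝[>] (0 : ℝ), xb + t • v ∈ closedBall xb δ ∧ ε * t < δ := by
    have hx : Tendsto (fun t : ℝ => xb + t • v) (𝓝 0) (𝓝 xb) := by
      simpa using tendsto_const_nhds.add ((tendsto_id (x := 𝓝 (0 : ℝ))).smul_const v)
    have hεt : Tendsto (fun t : ℝ => ε * t) (𝓝 0) (𝓝 0) := by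
      simpa using (tendsto_id (x := 𝓝 (0 : ℝ))).const_mul ε
    exact nhdsWithin_le_nhds
      ((hx.eventually (closedBall_mem_nhds xb hδ)).and (hεt.eventually (gt_mem_nhds hδ)))
  have hmerit := hH.eventually_infDist_le hadd hCcone hxbG hvH
    (show 0 < ε * (α - 1) / 2 by nlinarith)
  refine ((frequently_mem_of_mem_weakFeasDirCone hvS).and_eventually
    (hmerit.and (hnear.and self_mem_nhdsWithin))).mono ?_
  rintro t ⟨htS, hM, ⟨hxδ, hεt⟩, ht⟩
  obtain ⟨z, hzR, hz⟩ := hmiδ.exists_mem_near hCcl hCconv hadd ⟨0, hC0⟩ ⟨hxδ, htS⟩ (hG _) hM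
    ⟨mul_pos hε ht, hεt⟩ (by nlinarith [mul_pos (mul_pos hε ht) (sub_pos.2 hα)])
  exact ⟨z, hzR, by rwa [← dist_eq_norm]⟩

/-- inner tangential approximation of the solution set of a set-valued
inclusion via outer prederivatives (weak feasible direction cone version). -/
theorem statement_8
    {X Z : Type*} [NormedAddCommGroup X] [NormedSpace ℝ X] [CompleteSpace X]
    [NormedAddCommGroup Z] [NormedSpace ℝ Z] [CompleteSpace Z]
    (S : Set X) (hSne : S.Nonempty) (hScl : IsClosed S)
    (C : Set Z) (hCcl : IsClosed C) (hCconv : Convex ℝ C)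
    (hCcone : ∀ t : ℝ, 0 < t → ∀ z ∈ C, t • z ∈ C) (hC0 : (0:Z) ∈ C)
    (hCne0 : C ≠ {0}) (hCneuniv : C ≠ Set.univ)
    (G : X → Set Z) (hG : ∀ x, (G x).Nonempty)
    (xb : X) (hxbS : xb ∈ S) (hxbG : G xb ⊆ C)
    (hlsc : LscAround G xb) (hmi : MetIncr G S C xb)
    (H : X → Set Z) (hH : OuterPrederivAt G H xb) :
    upperInv H C ∩ weakFeasDirCone S xb ⊆ contingentCone (S ∩ {x | G x ⊆ C}) xb :=
  statement_8_general S C hCcl hCconv hCcone hC0 G hG xb hxbG hmi H hH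
end
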